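/- arXiv:2605.02595 — 11 statements merged into one kernel-verified Lean document; each statement's English description precedes it below -/
import Mathlib

section
/- For every natural number n ≥ 1, the polynomial T_n(u,v) = Σ_{k=0}^{n} C(n,k)·C(n,k-1)·u^k·v^{n-k+1} (where C(n,j) denotes the binomial coefficient, with C(n,-1)=0) satisfies the identity v·∂²T_n/∂v² = u·∂²T_n/∂u² for all real u, v. -/
open Real Finset

/-- Conserved density of the shallow water hierarchy:
`T n u v = ∑_{k=0}^{n} C(n,k) * C(n,k-1) * u^k * v^(n-k+1)`, with `C(n,-1) = 0`. -/
noncomputable def Tsw (n : ℕ) (u v : ℝ) : ℝ :=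
  ∑ k ∈ Finset.range (n + 1),
    ((n.choose k : ℝ) * (if k = 0 then (0 : ℝ) else (n.choose (k - 1) : ℝ))) *
      u ^ k * v ^ (n - k + 1)

/-!
Both sides are polynomials with monomials `u^k v^(n-k)`. On `u^k v^(n-k+1)` the operator
`v ∂²_v` acts as `(n-k+1)(n-k) u^k v^(n-k)` and on `u^(k+1) v^(n-k)` the operator `u ∂²_u`
acts as `(k+1)k u^k v^(n-k)`, so the identity amounts to the coefficient recurrence
`C(n,k) C(n,k-1) (n-k+1)(n-k) = C(n,k+1) C(n,k) (k+1) k`, which is two applications of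
`C(n,j+1) (j+1) = C(n,j) (n-j)`.
-/

section PolynomialSums

variable {𝕜 ι : Type*} [NontriviallyNormedField 𝕜] (s : Finset ι) (c : ι → 𝕜) (e : ι → ℕ)

theorem deriv_sum_mul_pow :
    deriv (fun x : 𝕜 => ∑ i ∈ s, c i * x ^ e i) = fun x => ∑ i ∈ s, (c i * e i) * x ^ (e i - 1) := by
  funext x
  rw [deriv_fun_sum fun i _ => (differentiableAt_pow (e i)).const_mul (c i)]
  refine sum_congr rfl fun i _ => ?_
  rw [deriv_const_mul _ (differentiableAt_pow (e i)), deriv_pow_field, mul_assoc]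

theorem mul_deriv_deriv_sum_mul_pow (x : 𝕜) :
    x * deriv (deriv fun x : 𝕜 => ∑ i ∈ s, c i * x ^ e i) x
      = ∑ i ∈ s, c i * ((e i * (e i - 1) : ℕ) : 𝕜) * x ^ (e i - 1) := by
  rw [deriv_sum_mul_pow, deriv_sum_mul_pow, mul_sum]
  refine sum_congr rfl fun i _ => ?_
  rcases e i with _ | _ | m
  · simp
  · simp
  · simp only [Nat.add_sub_cancel, Nat.cast_mul, Nat.cast_add, Nat.cast_one]
    ring

end PolynomialSums

theorem choose_mul_choose_pred_recurrence (n k : ℕ) :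
    n.choose k * (if k = 0 then 0 else n.choose (k - 1)) * ((n - k + 1) * (n - k))
      = n.choose (k + 1) * n.choose k * ((k + 1) * k) := by
  rcases k with _ | k
  · simp
  have step_k : n.choose (k + 1) * (k + 1) = n.choose k * (n - k) := Nat.choose_succ_right_eq n k
  have step_k1 : n.choose (k + 2) * (k + 2) = n.choose (k + 1) * (n - (k + 1)) :=
    Nat.choose_succ_right_eq n (k + 1)
  have hfactor : (n - (k + 1) + 1) * (n - (k + 1)) = (n - k) * (n - (k + 1)) := by
    rcases Nat.lt_or_ge k n with h | h
    · rw [show n - (k + 1) + 1 = n - k by omega]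
    · simp [show n - (k + 1) = 0 by omega]
  simp only [Nat.add_one_ne_zero, if_false, Nat.add_sub_cancel, hfactor]
  calc n.choose (k + 1) * n.choose k * ((n - k) * (n - (k + 1)))
      = (n.choose k * (n - k)) * (n.choose (k + 1) * (n - (k + 1))) := by ring
    _ = (n.choose (k + 1) * (k + 1)) * (n.choose (k + 2) * (k + 2)) := by rw [step_k, step_k1]
    _ = n.choose (k + 1 + 1) * n.choose (k + 1) * ((k + 1 + 1) * (k + 1)) := by ring

theorem shallow_water_density_identity_general (n : ℕ) (u v : ℝ) :
    v * deriv (deriv (fun v' => Tsw n u v')) v = u * deriv (deriv (fun u' => Tsw n u' v)) u := by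
  set b : ℕ → ℝ := fun k =>
    (n.choose k : ℝ) * (if k = 0 then (0 : ℝ) else (n.choose (k - 1) : ℝ)) with hb
  have hv : (fun v' => Tsw n u v')
      = fun x : ℝ => ∑ k ∈ range (n + 1), (b k * u ^ k) * x ^ (n - k + 1) := rfl
  have hu : (fun u' => Tsw n u' v)
      = fun x : ℝ => ∑ k ∈ range (n + 1), (b k * v ^ (n - k + 1)) * x ^ k := by
    funext x
    exact sum_congr rfl fun k _ => by ring
  rw [hv, hu, mul_deriv_deriv_sum_mul_pow, mul_deriv_deriv_sum_mul_pow]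
  -- the term `k = n` on the left and the term `k = 0` on the right vanish; shift the right sum
  rw [sum_range_succ, sum_range_succ']
  simp only [Nat.sub_self, zero_add, mul_zero, Nat.cast_zero, zero_mul, add_zero]
  refine sum_congr rfl fun k hk => ?_
  have hnk : n - (k + 1) + 1 = n - k := by have := mem_range.mp hk; omega
  have hcoeff := congrArg (Nat.cast (R := ℝ)) (choose_mul_choose_pred_recurrence n k)
  simp only [hb, Nat.add_sub_cancel, hnk, Nat.add_one_ne_zero, if_false]
  simp only [Nat.cast_mul, Nat.cast_add, Nat.cast_one, Nat.cast_ite, Nat.cast_zero] at hcoeff ⊢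
  linear_combination (u ^ k * v ^ (n - k)) * hcoeff

theorem shallow_water_density_identity (n : ℕ) (hn : 1 ≤ n) (u v : ℝ) :
    v * deriv (deriv (fun v' => Tsw n u v')) v = u * deriv (deriv (fun u' => Tsw n u' v)) u :=
  shallow_water_density_identity_general n u v
end

section
/- For every natural number n ≥ 1, with T_n(u,v) = Σ_{k=0}^{n} C(n,k)·C(n,k-1)·u^k·v^{n-k+1}, the two polynomial expressions A(u,v) = (u+v)·∂T_n/∂u + 2v·∂T_n/∂v − T_n and B(u,v) = (u+v)·∂T_n/∂v + 2u·∂T_n/∂u − T_n satisfy the exactness condition ∂A/∂v = ∂B/∂u for all real u, v. -/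
open Real Finset

/-!
Writing `A = (u+v) T_u + 2v T_v - T` and `B = (u+v) T_v + 2u T_u - T`, the product rule gives
`∂A/∂v - ∂B/∂u = 2 (v T_vv - u T_uu)` for any twice differentiable `T`, so exactness is the
equation `u T_uu = v T_vv`. For `T = T_n` both sides are sums of monomials `u^k v^(n-k)`,
with coefficients `C(n,k) C(n,k-1) (n-k+1) (n-k)` and `C(n,k+1) C(n,k) (k+1) k`; the
absorption identity `C(n,j+1) (j+1) = C(n,j) (n-j)`, used for `j = k-1` and `j = k`, turns
both into `C(n,k) k · C(n,k+1) (k+1)`.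
-/

section MonomialSum

variable {ι : Type*} (s : Finset ι) (a : ι → ℝ) (p q : ι → ℕ)

noncomputable def monomialSum (u v : ℝ) : ℝ := ∑ i ∈ s, a i * u ^ p i * v ^ q i

theorem hasDerivAt_monomialSum_left (u v : ℝ) :
    HasDerivAt (fun u => monomialSum s a p q u v)
      (monomialSum s (fun i => a i * p i) (fun i => p i - 1) q u v) u := by
  unfold monomialSum
  refine HasDerivAt.fun_sum fun i _ => ?_
  exact (((hasDerivAt_pow (p i) u).const_mul (a i)).mul_const (v ^ q i)).congr_deriv (by ring)

theorem hasDerivAt_monomialSum_right (u v : ℝ) :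
    HasDerivAt (fun v => monomialSum s a p q u v)
      (monomialSum s (fun i => a i * q i) p (fun i => q i - 1) u v) v := by
  unfold monomialSum
  refine HasDerivAt.fun_sum fun i _ => ?_
  exact ((hasDerivAt_pow (q i) v).const_mul (a i * u ^ p i)).congr_deriv (by ring)

end MonomialSum

theorem deriv_sub_deriv_eq {T Tu Tv : ℝ → ℝ → ℝ} {u v Tuu Tuv Tvv : ℝ}
    (hu : ∀ u v, HasDerivAt (fun u => T u v) (Tu u v) u)
    (hv : ∀ u v, HasDerivAt (fun v => T u v) (Tv u v) v)
    (huu : HasDerivAt (fun u => Tu u v) Tuu u) (huv : HasDerivAt (fun v => Tu u v) Tuv v)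
    (hvu : HasDerivAt (fun u => Tv u v) Tuv u) (hvv : HasDerivAt (fun v => Tv u v) Tvv v) :
    deriv (fun v' => (u + v') * deriv (fun u' => T u' v') u
        + 2 * v' * deriv (fun w => T u w) v' - T u v') v -
      deriv (fun u' => (u' + v) * deriv (fun w => T u' w) v
        + 2 * u' * deriv (fun w => T w v) u' - T u' v) u =
      2 * (v * Tvv - u * Tuu) := by
  simp only [fun u v => (hu u v).deriv, fun u v => (hv u v).deriv]
  have hA : HasDerivAt (fun v' => (u + v') * Tu u v' + 2 * v' * Tv u v' - T u v')
      (1 * Tu u v + (u + v) * Tuv + (2 * 1 * Tv u v + 2 * v * Tvv) - Tv u v) v :=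
    ((((hasDerivAt_id v).const_add u).mul huv).add
      (((hasDerivAt_id v).const_mul 2).mul hvv)).sub (hv u v)
  have hB : HasDerivAt (fun u' => (u' + v) * Tv u' v + 2 * u' * Tu u' v - T u' v)
      (1 * Tv u v + (u + v) * Tuv + (2 * 1 * Tu u v + 2 * u * Tuu) - Tu u v) u :=
    ((((hasDerivAt_id u).add_const v).mul hvu).add
      (((hasDerivAt_id u).const_mul 2).mul huu)).sub (hu u v)
  rw [hA.deriv, hB.deriv]
  ring

namespace Tsw

noncomputable def coeff (n k : ℕ) : ℝ :=
  (n.choose k : ℝ) * (if k = 0 then (0 : ℝ) else (n.choose (k - 1) : ℝ))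

theorem eq_monomialSum (n : ℕ) :
    Tsw n = monomialSum (range (n + 1)) (coeff n) (fun k => k) (fun k => n - k + 1) :=
  rfl

theorem choose_pred_mul {n k : ℕ} (hk : k ≤ n) :
    (if k = 0 then (0 : ℝ) else (n.choose (k - 1) : ℝ)) * ((n - k + 1 : ℕ) : ℝ) =
      n.choose k * k := by
  cases k with
  | zero => simp
  | succ j =>
    rw [if_neg j.succ_ne_zero, Nat.add_sub_cancel, show n - (j + 1) + 1 = n - j by omega]
    exact_mod_cast (Nat.choose_succ_right_eq n j).symm

theorem coeff_mul_of_lt {n k : ℕ} (hk : k < n) :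
    coeff n k * ((n - k + 1 : ℕ) : ℝ) * ((n - k : ℕ) : ℝ) =
      coeff n (k + 1) * ((k + 1 : ℕ) : ℝ) * k := by
  have h1 := choose_pred_mul hk.le
  have h2 : (n.choose (k + 1) : ℝ) * ((k + 1 : ℕ) : ℝ) = n.choose k * ((n - k : ℕ) : ℝ) := by
    exact_mod_cast Nat.choose_succ_right_eq n k
  simp only [coeff, if_neg k.succ_ne_zero, Nat.add_sub_cancel]
  linear_combination (n.choose k * ((n - k : ℕ) : ℝ)) * h1 - (n.choose k * (k : ℝ)) * h2

-- The two sums are the second partials `T_vv`, `T_uu` of `Tsw n` exactly as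
-- `hasDerivAt_monomialSum_right` and `hasDerivAt_monomialSum_left` produce them.
theorem v_mul_partial_vv_eq_u_mul_partial_uu (n : ℕ) (u v : ℝ) :
    v * monomialSum (range (n + 1)) (fun k => coeff n k * ↑(n - k + 1) * ↑(n - k + 1 - 1))
        (fun k => k) (fun k => n - k + 1 - 1 - 1) u v =
      u * monomialSum (range (n + 1)) (fun k => coeff n k * ↑k * ↑(k - 1))
        (fun k => k - 1 - 1) (fun k => n - k + 1) u v := by
  -- The term `k = n` of the left sum and the term `k = 0` of the right sum vanish.
  calc _ = ∑ k ∈ range n,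
          coeff n k * ((n - k + 1 : ℕ) : ℝ) * ((n - k : ℕ) : ℝ) * u ^ k * v ^ (n - k) := by
        rw [monomialSum, mul_sum, sum_range_succ]
        simp only [Nat.cast_add, Nat.cast_one, add_tsub_cancel_right, tsub_self, zero_add,
          mul_one, CharP.cast_eq_zero, mul_zero, zero_mul, zero_tsub, pow_zero, add_zero]
        refine sum_congr rfl fun k hk => ?_
        rw [← mul_pow_sub_one (Nat.sub_ne_zero_of_lt (mem_range.mp hk)) v]
        ring
    _ = ∑ k ∈ range n, coeff n (k + 1) * ((k + 1 : ℕ) : ℝ) * k * u ^ k * v ^ (n - k) :=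
        sum_congr rfl fun k hk => by rw [coeff_mul_of_lt (mem_range.mp hk)]
    _ = _ := by
        rw [monomialSum, mul_sum, sum_range_succ']
        simp only [Nat.cast_add, Nat.cast_one, add_tsub_cancel_right, CharP.cast_eq_zero,
          mul_zero, zero_tsub, pow_zero, mul_one, tsub_zero, zero_mul, add_zero]
        refine sum_congr rfl fun k hk => ?_
        rcases Nat.eq_zero_or_pos k with rfl | hk0
        · simp
        · rw [← mul_pow_sub_one hk0.ne' u, Nat.sub_add_eq, Nat.sub_add_cancel
            (Nat.sub_pos_of_lt (mem_range.mp hk))]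
          ring

end Tsw

theorem shallow_water_exactness_general (n : ℕ) (u v : ℝ) :
    deriv (fun v' =>
        (u + v') * deriv (fun u' => Tsw n u' v') u
          + 2 * v' * deriv (fun w => Tsw n u w) v' - Tsw n u v') v =
      deriv (fun u' =>
        (u' + v) * deriv (fun w => Tsw n u' w) v
          + 2 * u' * deriv (fun w => Tsw n w v) u' - Tsw n u' v) u := by
  rw [Tsw.eq_monomialSum, ← sub_eq_zero,
    deriv_sub_deriv_eq (hasDerivAt_monomialSum_left _ _ _ _) (hasDerivAt_monomialSum_right _ _ _ _)
      (hasDerivAt_monomialSum_left _ _ _ _ u v) (hasDerivAt_monomialSum_right _ _ _ _ u v)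
      ((hasDerivAt_monomialSum_left _ _ _ _ u v).congr_deriv
        (by simp only [monomialSum, mul_right_comm]))
      (hasDerivAt_monomialSum_right _ _ _ _ u v),
    Tsw.v_mul_partial_vv_eq_u_mul_partial_uu, sub_self, mul_zero]

theorem shallow_water_exactness (n : ℕ) (hn : 1 ≤ n) (u v : ℝ) :
    deriv (fun v' =>
        (u + v') * deriv (fun u' => Tsw n u' v') u
          + 2 * v' * deriv (fun w => Tsw n u w) v' - Tsw n u v') v =
      deriv (fun u' =>
        (u' + v) * deriv (fun w => Tsw n u' w) v
          + 2 * u' * deriv (fun w => Tsw n w v) u' - Tsw n u' v) u :=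
  shallow_water_exactness_general n u v
end

section
/- For every natural number n ≥ 1, with T_n(u,v) = Σ_{k=0}^{n} C(n,k)·C(n,k-1)·u^k·v^{n-k+1}, there exists a polynomial (equivalently, a smooth function) S_n(u,v) such that ∂S_n/∂u = (u+v)·∂T_n/∂u + 2v·∂T_n/∂v − T_n and ∂S_n/∂v = (u+v)·∂T_n/∂v + 2u·∂T_n/∂u − T_n for all real u, v. -/
open Real Finset

/-- Symmetric coefficient `C(n,k)*C(n,k-1)` with the convention `C(n,-1)=0`. -/
def Csw (n k : ℕ) : ℕ := if k = 0 then 0 else n.choose k * n.choose (k - 1)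

lemma Csw_eq_zero {n m : ℕ} (h : n < m) : Csw n m = 0 := by
  unfold Csw; rw [if_neg (by omega), Nat.choose_eq_zero_of_lt h, zero_mul]

lemma Csw_symm (n j : ℕ) (h1 : 1 ≤ j) (h2 : j ≤ n) : Csw n (n-j+1) = Csw n j := by
  unfold Csw
  rw [if_neg (by omega), if_neg (by omega)]
  have e1 : n - j + 1 = n - (j-1) := by omega
  rw [e1]
  have e2 : n - (j-1) - 1 = n - j := by omega
  rw [e2, Nat.choose_symm (by omega), Nat.choose_symm (by omega)]
  rw [mul_comm]

/-- The key binomial identity behind the flux computation. -/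
lemma Csw_K (n a : ℕ) :
    (n+1) * ((a + 2*(n-a+1)) * Csw n a + (a+1) * Csw n (a+1))
      = n*(a+1)*Csw (n+1) (a+1) + (n+1)*Csw n a := by
  rcases a with _ | b
  · simp [Csw, Nat.choose_one_right]
    ring
  · rcases Nat.lt_or_ge n (b+1) with h | h
    · have h1 : n.choose (b+1) = 0 := Nat.choose_eq_zero_of_lt h
      have h2 : (n+1).choose (b+2) = 0 := Nat.choose_eq_zero_of_lt (by omega)
      have h3 : n.choose (b+2) = 0 := Nat.choose_eq_zero_of_lt (by omega)
      simp [Csw, h1, h2, h3]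
    · have hb : b ≤ n := by omega
      simp only [Csw, if_neg (Nat.succ_ne_zero _), Nat.add_sub_cancel]
      rw [Nat.choose_succ_succ n (b+1), Nat.choose_succ_succ n b]
      have r0 := Nat.choose_succ_right_eq n b
      have r1 := Nat.choose_succ_right_eq n (b+1)
      zify [h, hb] at r0 r1 ⊢
      linear_combination (((n:ℤ)+1)*(n.choose (b+1)) - n*((n.choose b) + (n.choose (b+1)))) * r1
        - ((n:ℤ)+1)*(n.choose (b+1)) * r0

lemma coef_id (n a : ℕ) :
    (Csw n a : ℝ) * ↑a + (Csw n (a+1) : ℝ) * ↑(a+1) + (Csw n a : ℝ) * (2*↑(n-a+1))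
        - (Csw n a : ℝ)
      = ((n:ℝ)/((n:ℝ)+1)) * ((Csw (n+1) (a+1) : ℝ) * ↑(a+1)) := by
  have hcast := congrArg (Nat.cast : ℕ → ℝ) (Csw_K n a)
  push_cast at hcast
  have h1 : ((n:ℝ)+1) ≠ 0 := by positivity
  push_cast
  rw [div_mul_eq_mul_div, eq_div_iff h1]
  linear_combination hcast

/-- Explicit `u`-derivative of `Tsw`. -/
noncomputable def Du (n : ℕ) (u v : ℝ) : ℝ :=
  ∑ k ∈ Finset.range (n+2), (Csw n k : ℝ) * (↑k * u^(k-1)) * v^(n-k+1)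

/-- Explicit `v`-derivative of `Tsw`. -/
noncomputable def Dv (n : ℕ) (u v : ℝ) : ℝ :=
  ∑ k ∈ Finset.range (n+2), (Csw n k : ℝ) * u^k * (↑(n-k+1) * v^(n-k+1-1))

lemma Tsw_eq (n : ℕ) (u v : ℝ) :
    Tsw n u v = ∑ k ∈ Finset.range (n+2), (Csw n k : ℝ) * u^k * v^(n-k+1) := by
  unfold Tsw
  conv_rhs => rw [Finset.sum_range_succ]
  rw [Csw_eq_zero (Nat.lt_succ_self n)]
  simp only [Nat.cast_zero, zero_mul, add_zero]
  refine Finset.sum_congr rfl fun k hk => ?_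
  rcases k with _ | j
  · simp [Csw]
  · simp only [Csw, if_neg (Nat.succ_ne_zero j)]
    push_cast
    ring

lemma Tsw_symm (n : ℕ) (u v : ℝ) : Tsw n u v = Tsw n v u := by
  rw [Tsw_eq n u v, Tsw_eq n v u]
  rw [← Finset.sum_range_reflect (fun k => (Csw n k : ℝ) * v^k * u^(n-k+1)) (n+2)]
  refine Finset.sum_congr rfl fun j hj => ?_
  simp only [Finset.mem_range] at hj
  rcases Nat.eq_zero_or_pos j with h0 | h0
  · subst h0
    have e : n + 2 - 1 - 0 = n + 1 := by omega
    rw [e, Csw_eq_zero (Nat.lt_succ_self n)]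
    simp [Csw]
  · rcases Nat.lt_or_ge j (n+1) with h | h
    · have e : n + 2 - 1 - j = n - j + 1 := by omega
      have e2 : n - (n - j + 1) + 1 = j := by omega
      rw [e, Csw_symm n j h0 (by omega), e2]
      ring
    · have hj1 : j = n + 1 := by omega
      subst hj1
      have e : n + 2 - 1 - (n+1) = 0 := by omega
      rw [e, Csw_eq_zero (Nat.lt_succ_self n)]
      simp [Csw]

lemma Dv_eq_Du_swap (n : ℕ) (u v : ℝ) : Dv n u v = Du n v u := by
  unfold Du Dv
  rw [← Finset.sum_range_reflect (fun k => (Csw n k : ℝ) * (↑k * v^(k-1)) * u^(n-k+1)) (n+2)]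
  refine Finset.sum_congr rfl fun j hj => ?_
  simp only [Finset.mem_range] at hj
  rcases Nat.eq_zero_or_pos j with h0 | h0
  · subst h0
    have e : n + 2 - 1 - 0 = n + 1 := by omega
    rw [e, Csw_eq_zero (Nat.lt_succ_self n)]
    simp [Csw]
  · rcases Nat.lt_or_ge j (n+1) with h | h
    · have e : n + 2 - 1 - j = n - j + 1 := by omega
      have e2 : n - (n - j + 1) + 1 = j := by omega
      rw [e, Csw_symm n j h0 (by omega), e2]
      ring
    · have hj1 : j = n + 1 := by omega
      subst hj1
      have e : n + 2 - 1 - (n+1) = 0 := by omega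
      rw [e, Csw_eq_zero (Nat.lt_succ_self n)]
      simp [Csw]

lemma hasDerivAt_Tsw_u (n : ℕ) (u v : ℝ) :
    HasDerivAt (fun u' => Tsw n u' v) (Du n u v) u := by
  have he : (fun u' => Tsw n u' v)
      = fun u' => ∑ k ∈ Finset.range (n+2), (Csw n k : ℝ) * u'^k * v^(n-k+1) :=
    funext fun u' => Tsw_eq n u' v
  rw [he]
  exact HasDerivAt.fun_sum fun k _ =>
    ((hasDerivAt_pow k u).const_mul ((Csw n k : ℝ))).mul_const (v^(n-k+1))

lemma hasDerivAt_Tsw_v (n : ℕ) (u v : ℝ) :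
    HasDerivAt (fun v' => Tsw n u v') (Dv n u v) v := by
  have he : (fun v' => Tsw n u v')
      = fun v' => ∑ k ∈ Finset.range (n+2), (Csw n k : ℝ) * u^k * v'^(n-k+1) :=
    funext fun v' => Tsw_eq n u v'
  rw [he]
  exact HasDerivAt.fun_sum fun k _ =>
    (hasDerivAt_pow (n-k+1) v).const_mul ((Csw n k : ℝ) * u^k)

lemma sum_shift (m : ℕ) (f : ℕ → ℝ) (h0 : f 0 = 0) (htop : f (m+1) = 0) :
    ∑ k ∈ Finset.range (m+1), f k = ∑ a ∈ Finset.range (m+1), f (a+1) := by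
  rw [Finset.sum_range_succ' f m, h0, add_zero, Finset.sum_range_succ, htop, add_zero]

lemma main_id (n : ℕ) (u v : ℝ) :
    (u+v) * Du n u v + 2*v * Dv n u v - Tsw n u v
      = ((n:ℝ)/((n:ℝ)+1)) * Du (n+1) u v := by
  have hA : u * Du n u v
      = ∑ a ∈ Finset.range (n+2), ((Csw n a : ℝ) * ↑a) * u^a * v^(n-a+1) := by
    unfold Du
    rw [Finset.mul_sum]
    refine Finset.sum_congr rfl fun k _ => ?_
    rcases k with _ | j
    · simp
    · simp only [Nat.add_sub_cancel]
      ring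
  have hB : v * Du n u v
      = ∑ a ∈ Finset.range (n+2), ((Csw n (a+1) : ℝ) * ↑(a+1)) * u^a * v^(n-a+1) := by
    unfold Du
    rw [Finset.mul_sum]
    calc ∑ k ∈ Finset.range (n+2), v * ((Csw n k : ℝ) * (↑k * u^(k-1)) * v^(n-k+1))
        = ∑ k ∈ Finset.range (n+2), (Csw n k : ℝ) * ↑k * u^(k-1) * v^(n-k+1+1) :=
          Finset.sum_congr rfl fun k _ => by ring
      _ = ∑ a ∈ Finset.range (n+2), (Csw n (a+1) : ℝ) * ↑(a+1) * u^(a+1-1) * v^(n-(a+1)+1+1) :=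
          sum_shift (n+1) _ (by simp) (by
            rw [Csw_eq_zero (show n < n+1+1 by omega)]; simp)
      _ = ∑ a ∈ Finset.range (n+2), ((Csw n (a+1) : ℝ) * ↑(a+1)) * u^a * v^(n-a+1) := by
          refine Finset.sum_congr rfl fun a _ => ?_
          rcases Nat.lt_or_ge a n with h | h
          · have e : n-(a+1)+1+1 = n-a+1 := by omega
            rw [Nat.add_sub_cancel, e]
          · rw [Csw_eq_zero (show n < a+1 by omega)]
            simp
  have hC : 2*v * Dv n u v
      = ∑ a ∈ Finset.range (n+2), ((Csw n a : ℝ) * (2*↑(n-a+1))) * u^a * v^(n-a+1) := by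
    unfold Dv
    rw [Finset.mul_sum]
    refine Finset.sum_congr rfl fun k hk => ?_
    simp only [Finset.mem_range] at hk
    rcases Nat.lt_or_ge k (n+1) with h | h
    · have e : n-k+1-1 = n-k := by omega
      have e2 : n-k+1 = (n-k)+1 := rfl
      rw [e, e2]
      ring
    · have hk1 : k = n+1 := by omega
      subst hk1
      rw [Csw_eq_zero (Nat.lt_succ_self n)]
      simp
  have hR : ((n:ℝ)/((n:ℝ)+1)) * Du (n+1) u v
      = ∑ a ∈ Finset.range (n+2),
          (((n:ℝ)/((n:ℝ)+1)) * ((Csw (n+1) (a+1) : ℝ) * ↑(a+1))) * u^a * v^(n-a+1) := by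
    have h1 : Du (n+1) u v
        = ∑ a ∈ Finset.range (n+2), ((Csw (n+1) (a+1) : ℝ) * ↑(a+1)) * u^a * v^(n-a+1) := by
      unfold Du
      rw [show (n+1)+2 = (n+2)+1 from rfl]
      rw [sum_shift (n+2) _ (by simp) (by
        rw [Csw_eq_zero (show n+1 < n+2+1 by omega)]; simp)]
      rw [Finset.sum_range_succ, Csw_eq_zero (show n+1 < n+2+1 by omega)]
      simp only [Nat.cast_zero, zero_mul, add_zero]
      refine Finset.sum_congr rfl fun a _ => ?_
      have e : n+1-(a+1)+1 = n-a+1 := by omega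
      rw [Nat.add_sub_cancel, e]
      ring
    rw [h1, Finset.mul_sum]
    exact Finset.sum_congr rfl fun a _ => by ring
  rw [add_mul, hA, hB, hC, Tsw_eq n u v, hR]
  rw [← Finset.sum_add_distrib, ← Finset.sum_add_distrib, ← Finset.sum_sub_distrib]
  refine Finset.sum_congr rfl fun a _ => ?_
  linear_combination (u^a * v^(n-a+1)) * coef_id n a

theorem shallow_water_flux_potential_exists (n : ℕ) (hn : 1 ≤ n) :
    ∃ S : ℝ → ℝ → ℝ, ContDiff ℝ (⊤ : ℕ∞) (fun p : ℝ × ℝ => S p.1 p.2) ∧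
      ∀ u v : ℝ,
        HasDerivAt (fun u' => S u' v)
          ((u + v) * deriv (fun u' => Tsw n u' v) u
            + 2 * v * deriv (fun v' => Tsw n u v') v - Tsw n u v) u ∧
        HasDerivAt (fun v' => S u v')
          ((u + v) * deriv (fun v' => Tsw n u v') v
            + 2 * u * deriv (fun u' => Tsw n u' v) u - Tsw n u v) v := by
  refine ⟨fun u v => ((n:ℝ)/((n:ℝ)+1)) * Tsw (n+1) u v, ?_, ?_⟩
  · have h : ContDiff ℝ (⊤ : ℕ∞) (fun p : ℝ × ℝ => Tsw (n+1) p.1 p.2) := by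
      unfold Tsw
      apply ContDiff.sum
      intro k _
      exact (contDiff_const.mul (contDiff_fst.pow k)).mul (contDiff_snd.pow (n+1-k+1))
    exact contDiff_const.mul h
  · intro u v
    have d1 : deriv (fun u' => Tsw n u' v) u = Du n u v := (hasDerivAt_Tsw_u n u v).deriv
    have d2 : deriv (fun v' => Tsw n u v') v = Dv n u v := (hasDerivAt_Tsw_v n u v).deriv
    rw [d1, d2]
    constructor
    · rw [show (u + v) * Du n u v + 2 * v * Dv n u v - Tsw n u v
          = ((n:ℝ)/((n:ℝ)+1)) * Du (n+1) u v from main_id n u v]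
      exact (hasDerivAt_Tsw_u (n+1) u v).const_mul _
    · have key : (u + v) * Dv n u v + 2 * u * Du n u v - Tsw n u v
          = ((n:ℝ)/((n:ℝ)+1)) * Dv (n+1) u v := by
        rw [Dv_eq_Du_swap n u v, Dv_eq_Du_swap (n+1) u v, Tsw_symm n u v,
          ← Dv_eq_Du_swap n v u]
        linear_combination main_id n v u
      rw [key]
      exact (hasDerivAt_Tsw_v (n+1) u v).const_mul _
end

section
/- Let P, Q : ℝ³ → ℝ be smooth functions of the variables (x, y, t) satisfying the system P_{xt} = P_x·P_{xy} + Q_x·P_{xy} + 2P_x·Q_{xy} + P_{xx}·P_y + P_{xx}·Q_y and Q_{xt} = Q_x·Q_{xy} + P_x·Q_{xy} + 2Q_x·P_{xy} + Q_{xx}·Q_y + Q_{xx}·P_y. Then for every natural number n ≥ 1 there exists a smooth function S_n : ℝ² → ℝ such that the local conservation law ∂_t [T_n(P_x, Q_x)] = ∂_x [T_n(P_x, Q_x)·(P_y + Q_y)] + ∂_y [S_n(P_x, Q_x)] holds identically, where T_n(u,v) = Σ_{k=0}^{n} C(n,k)·C(n,k-1)·u^k·v^{n-k+1}. In particular, the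 system admits an infinite set of conservation laws. -/
open Real Finset

/-- Partial derivative in the first variable `x`. -/
noncomputable def dX (P : ℝ → ℝ → ℝ → ℝ) (x y t : ℝ) : ℝ :=
  deriv (fun s => P s y t) x

/-- Partial derivative in the second variable `y`. -/
noncomputable def dY (P : ℝ → ℝ → ℝ → ℝ) (x y t : ℝ) : ℝ :=
  deriv (fun s => P x s t) y

/- ### Auxiliary combinatorial development -/

noncomputable def cc (n k : ℕ) : ℝ :=
  (n.choose k : ℝ) * (if k = 0 then (0 : ℝ) else (n.choose (k - 1) : ℝ))

noncomputable def TU (n : ℕ) (u v : ℝ) : ℝ :=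
  ∑ k ∈ Finset.range (n + 1), cc n k * (k : ℝ) * u ^ (k - 1) * v ^ (n - k + 1)

noncomputable def TV (n : ℕ) (u v : ℝ) : ℝ :=
  ∑ k ∈ Finset.range (n + 1), cc n k * u ^ k * (((n - k + 1 : ℕ) : ℝ) * v ^ (n - k))

lemma Tsw_eq_cc (n : ℕ) (u v : ℝ) :
    Tsw n u v = ∑ k ∈ Finset.range (n + 1), cc n k * u ^ k * v ^ (n - k + 1) := rfl

lemma cc_top (n : ℕ) : cc n (n + 1) = 0 := by
  simp [cc, Nat.choose_succ_self]

lemma cc_zero (n : ℕ) : cc n 0 = 0 := by simp [cc]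

lemma key_nat {n k : ℕ} (hk1 : 1 ≤ k) (hkn : k ≤ n) :
    (2 * n + 1 - k) * n.choose (k - 1) + (k + 1) * n.choose (k + 1)
      = n * (n + 1).choose k := by
  obtain ⟨j, rfl⟩ := Nat.exists_eq_add_of_le' hk1
  have h1 : n.choose (j + 1) * (j + 1) = n.choose j * (n - j) :=
    Nat.choose_succ_right_eq n j
  have h2 : n.choose (j + 2) * (j + 2) = n.choose (j + 1) * (n - (j + 1)) :=
    Nat.choose_succ_right_eq n (j + 1)
  have h3 : (n + 1).choose (j + 1) = n.choose j + n.choose (j + 1) :=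
    Nat.choose_succ_succ n j
  have hs : 2 * n + 1 - (j + 1) = n + (n - j) := by omega
  have hs2 : j + 1 - 1 = j := by omega
  have hs3 : j + 1 + 1 = j + 2 := by omega
  rw [hs, hs2, hs3, h3]
  nlinarith [h1, h2, Nat.sub_add_cancel hkn, Nat.sub_add_cancel (show j ≤ n by omega)]

lemma star (n k : ℕ) (hk : k ≤ n) :
    cc n k * (2 * (n : ℝ) + 1 - (k : ℝ)) + cc n (k + 1) * ((k : ℝ) + 1)
      = ((n : ℝ) / ((n : ℝ) + 1)) * (cc (n + 1) (k + 1) * ((k : ℝ) + 1)) := by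
  have hn1 : ((n : ℝ) + 1) ≠ 0 := by positivity
  rcases Nat.eq_zero_or_pos k with rfl | hk1
  · simp only [cc, if_pos rfl, if_neg (Nat.one_ne_zero)]
    simp only [Nat.choose_zero_right, Nat.choose_one_right]
    push_cast
    field_simp
    rw [Nat.choose_one_right, Nat.choose_zero_right, Nat.choose_one_right, Nat.choose_zero_right]
    push_cast
    ring
  · have hif : (k ≠ 0) := by omega
    have hif2 : (k + 1 ≠ 0) := by omega
    simp only [cc, if_neg hif, if_neg hif2, Nat.add_sub_cancel]
    have hkey : ((2 * n + 1 - k : ℕ) : ℝ) * (n.choose (k - 1) : ℝ)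
        + ((k : ℝ) + 1) * (n.choose (k + 1) : ℝ) = (n : ℝ) * ((n + 1).choose k : ℝ) := by
      exact_mod_cast congrArg (fun m : ℕ => (m : ℝ)) (key_nat hk1 hk)
    have hcast : ((2 * n + 1 - k : ℕ) : ℝ) = 2 * (n : ℝ) + 1 - (k : ℝ) := by
      have : k ≤ 2 * n + 1 := by omega
      push_cast [Nat.cast_sub this]
      ring
    rw [hcast] at hkey
    have hsucc : ((n : ℝ) + 1) * (n.choose k : ℝ)
        = ((k : ℝ) + 1) * ((n + 1).choose (k + 1) : ℝ) := by
      have h := Nat.add_one_mul_choose_eq n k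
      have h2 : (n + 1) * n.choose k = (n + 1).choose (k + 1) * (k + 1) := h
      have := congrArg (fun m : ℕ => (m : ℝ)) h2
      push_cast at this
      linarith [this]
    field_simp
    linear_combination (((n : ℝ) + 1) * (n.choose k : ℝ)) * hkey
      + ((n : ℝ) * ((n + 1).choose k : ℝ)) * hsucc

lemma idA (n : ℕ) (u v : ℝ) :
    (u + v) * TU n u v + 2 * v * TV n u v =
      Tsw n u v + ((n : ℝ) / ((n : ℝ) + 1)) * TU (n + 1) u v := by
  have h1 : u * TU n u v
      = ∑ k ∈ range (n + 1), cc n k * (k : ℝ) * u ^ k * v ^ (n - k + 1) := by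
    rw [TU, Finset.mul_sum]
    refine Finset.sum_congr rfl fun k hk => ?_
    rcases Nat.eq_zero_or_pos k with rfl | hkpos
    · simp
    · obtain ⟨j, rfl⟩ := Nat.exists_eq_add_of_le' hkpos
      simp only [Nat.add_sub_cancel]
      ring
  have h2 : v * TU n u v
      = ∑ k ∈ range (n + 1), cc n (k + 1) * ((k : ℝ) + 1) * u ^ k * v ^ (n - k + 1) := by
    rw [TU, Finset.mul_sum, Finset.sum_range_succ']
    rw [Finset.sum_range_succ]
    simp only [cc_top, Nat.cast_zero, Nat.cast_add, Nat.cast_one, mul_zero, zero_mul, add_zero]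
    refine Finset.sum_congr rfl fun k hk => ?_
    have hk' : k < n := Finset.mem_range.mp hk
    have e1 : k + 1 - 1 = k := by omega
    have e2 : n - (k + 1) + 1 = n - k := by omega
    rw [e1, e2]
    have e3 : n - k + 1 = (n - k) + 1 := rfl
    rw [e3, pow_succ]
    ring
  have h3 : 2 * v * TV n u v
      = ∑ k ∈ range (n + 1),
          cc n k * (2 * ((n - k + 1 : ℕ) : ℝ)) * u ^ k * v ^ (n - k + 1) := by
    rw [TV, Finset.mul_sum]
    refine Finset.sum_congr rfl fun k hk => ?_
    rw [pow_succ]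
    ring
  have h4 : ((n : ℝ) / ((n : ℝ) + 1)) * TU (n + 1) u v
      = ∑ k ∈ range (n + 1),
          ((n : ℝ) / ((n : ℝ) + 1)) * (cc (n + 1) (k + 1) * ((k : ℝ) + 1))
            * u ^ k * v ^ (n - k + 1) := by
    rw [TU, Finset.mul_sum, Finset.sum_range_succ']
    simp only [Nat.cast_zero, Nat.cast_add, Nat.cast_one, mul_zero, zero_mul, add_zero]
    refine Finset.sum_congr rfl fun k hk => ?_
    have e1 : k + 1 - 1 = k := rfl
    have e2 : n + 1 - (k + 1) + 1 = n - k + 1 := by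
      have := Finset.mem_range.mp hk; omega
    rw [e1, e2]
    ring
  rw [show (u + v) * TU n u v = u * TU n u v + v * TU n u v by ring, h1, h2, h3, h4,
    Tsw_eq_cc]
  rw [← Finset.sum_add_distrib, ← Finset.sum_add_distrib, ← Finset.sum_add_distrib]
  refine Finset.sum_congr rfl fun k hk => ?_
  have hkn : k ≤ n := by have := Finset.mem_range.mp hk; omega
  have hst := star n k hkn
  have hc : ((n - k + 1 : ℕ) : ℝ) = (n : ℝ) - (k : ℝ) + 1 := by
    push_cast [Nat.cast_sub hkn]; ring
  rw [hc]
  linear_combination (u ^ k * v ^ (n - k + 1)) * hst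

lemma cc_refl (n k : ℕ) (hk : k ≤ n + 1) : cc n (n + 1 - k) = cc n k := by
  rcases Nat.eq_zero_or_pos k with rfl | hk1
  · simpa using (cc_top n).trans (cc_zero n).symm
  · rcases Nat.eq_or_lt_of_le hk with rfl | hlt
    · simp [cc_zero, cc_top]
    · have hkn : k ≤ n := by omega
      have h1 : n + 1 - k ≠ 0 := by omega
      have h2 : k ≠ 0 := by omega
      simp only [cc, if_neg h1, if_neg h2]
      have e1 : n.choose (n + 1 - k) = n.choose (k - 1) := by
        rw [show n + 1 - k = n - (k - 1) by omega, Nat.choose_symm (by omega)]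
      have e2 : n.choose (n + 1 - k - 1) = n.choose k := by
        rw [show n + 1 - k - 1 = n - k by omega, Nat.choose_symm hkn]
      rw [e1, e2]; ring

lemma TV_eq_TU_swap (n : ℕ) (u v : ℝ) : TV n u v = TU n v u := by
  have key : (∑ k ∈ range (n + 2), cc n k * (k : ℝ) * v ^ (k - 1) * u ^ (n - k + 1))
      = TU n v u := by
    rw [Finset.sum_range_succ, cc_top, TU]
    ring
  rw [← key, ← Finset.sum_range_reflect, TV]
  rw [Finset.sum_range_succ (fun k => cc n (n + 2 - 1 - k) * ((n + 2 - 1 - k : ℕ) : ℝ)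
      * v ^ (n + 2 - 1 - k - 1) * u ^ (n - (n + 2 - 1 - k) + 1)) (n + 1)]
  have htop : n + 2 - 1 - (n + 1) = 0 := by omega
  rw [htop]
  simp only [cc_zero, Nat.cast_zero, zero_mul, mul_zero, add_zero]
  refine Finset.sum_congr rfl fun k hk => ?_
  have hk' : k < n + 1 := Finset.mem_range.mp hk
  have e0 : n + 2 - 1 - k = n + 1 - k := by omega
  rw [e0, cc_refl n k (by omega)]
  rcases Nat.eq_zero_or_pos k with rfl | hk1
  · simp [cc_zero]
  · have e1 : n + 1 - k - 1 = n - k := by omega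
    have e2 : n - (n + 1 - k) + 1 = k := by omega
    have e3 : (n + 1 - k : ℕ) = (n - k + 1 : ℕ) := by omega
    rw [e2, e1, e3]
    ring

lemma idB (n : ℕ) (u v : ℝ) :
    (u + v) * TV n u v + 2 * u * TU n u v =
      Tsw n u v + ((n : ℝ) / ((n : ℝ) + 1)) * TV (n + 1) u v := by
  have h := idA n v u
  rw [TV_eq_TU_swap n v u] at h
  rw [Tsw_symm n u v, TV_eq_TU_swap n u v, TV_eq_TU_swap (n + 1) u v]
  linear_combination h

/- ### Analysis helpers -/

lemma hasDerivAt_Tsw (n : ℕ) {U V : ℝ → ℝ} {u' v' s : ℝ}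
    (hu : HasDerivAt U u' s) (hv : HasDerivAt V v' s) :
    HasDerivAt (fun r => Tsw n (U r) (V r))
      (TU n (U s) (V s) * u' + TV n (U s) (V s) * v') s := by
  have h : HasDerivAt (fun r => ∑ k ∈ range (n + 1), cc n k * (U r) ^ k * (V r) ^ (n - k + 1))
      (∑ k ∈ range (n + 1),
        (cc n k * ((k : ℝ) * (U s) ^ (k - 1) * u') * (V s) ^ (n - k + 1)
          + cc n k * (U s) ^ k * (((n - k + 1 : ℕ) : ℝ) * (V s) ^ (n - k) * v'))) s := by
    refine HasDerivAt.fun_sum fun k _ => ?_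
    have h1 : HasDerivAt (fun r => (U r) ^ k) ((k : ℝ) * (U s) ^ (k - 1) * u') s := hu.pow k
    have h2 := hv.fun_pow (n - k + 1)
    simp only [Nat.add_sub_cancel] at h2
    have h3 := (h1.fun_mul h2).const_mul (cc n k)
    have h4 : (fun r => cc n k * (U r) ^ k * (V r) ^ (n - k + 1))
        = fun r => cc n k * ((U r) ^ k * (V r) ^ (n - k + 1)) := by
      funext r; ring
    rw [h4]
    refine h3.congr_deriv ?_
    ring
  have heq : (∑ k ∈ range (n + 1),
        (cc n k * ((k : ℝ) * (U s) ^ (k - 1) * u') * (V s) ^ (n - k + 1)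
          + cc n k * (U s) ^ k * (((n - k + 1 : ℕ) : ℝ) * (V s) ^ (n - k) * v')))
      = TU n (U s) (V s) * u' + TV n (U s) (V s) * v' := by
    rw [TU, TV, Finset.sum_mul, Finset.sum_mul, ← Finset.sum_add_distrib]
    refine Finset.sum_congr rfl fun k _ => ?_
    ring
  rw [heq] at h
  exact h

lemma slice1 {g : ℝ × ℝ × ℝ → ℝ} (hg : Differentiable ℝ g) (x y t : ℝ) :
    HasDerivAt (fun s => g (s, y, t)) (fderiv ℝ g (x, y, t) (1, 0, 0)) x :=
  (hg (x, y, t)).hasFDerivAt.comp_hasDerivAt x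
    ((hasDerivAt_id x).prodMk ((hasDerivAt_const x y).prodMk (hasDerivAt_const x t)))

lemma slice2 {g : ℝ × ℝ × ℝ → ℝ} (hg : Differentiable ℝ g) (x y t : ℝ) :
    HasDerivAt (fun s => g (x, s, t)) (fderiv ℝ g (x, y, t) (0, 1, 0)) y :=
  (hg (x, y, t)).hasFDerivAt.comp_hasDerivAt y
    ((hasDerivAt_const y x).prodMk ((hasDerivAt_id y).prodMk (hasDerivAt_const y t)))

lemma slice3 {g : ℝ × ℝ × ℝ → ℝ} (hg : Differentiable ℝ g) (x y t : ℝ) :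
    HasDerivAt (fun s => g (x, y, s)) (fderiv ℝ g (x, y, t) (0, 0, 1)) t :=
  (hg (x, y, t)).hasFDerivAt.comp_hasDerivAt t
    ((hasDerivAt_const t x).prodMk ((hasDerivAt_const t y).prodMk (hasDerivAt_id t)))

lemma smooth_pd {F : ℝ × ℝ × ℝ → ℝ} (hF : ContDiff ℝ (⊤ : ℕ∞) F) (e : ℝ × ℝ × ℝ) :
    ContDiff ℝ (⊤ : ℕ∞) (fun p => fderiv ℝ F p e) :=
  (hF.fderiv_right (by simp)).clm_apply contDiff_const

lemma pd_comm {F : ℝ × ℝ × ℝ → ℝ} (hF : ContDiff ℝ (⊤ : ℕ∞) F) (p e e' : ℝ × ℝ × ℝ) :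
    fderiv ℝ (fun q => fderiv ℝ F q e) p e' = fderiv ℝ (fun q => fderiv ℝ F q e') p e := by
  have hdF : Differentiable ℝ (fderiv ℝ F) := (hF.fderiv_right (m := (⊤ : ℕ∞)) (by simp)).differentiable (by simp)
  have h1 : ∀ q, HasFDerivAt F (fderiv ℝ F q) q := fun q =>
    ((hF.differentiable (by simp)) q).hasFDerivAt
  have hsymm := second_derivative_symmetric h1 (hdF p).hasFDerivAt e' e
  have key : ∀ w : ℝ × ℝ × ℝ, fderiv ℝ (fun q => fderiv ℝ F q w) p
      = (fderiv ℝ (fderiv ℝ F) p).flip w := by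
    intro w
    rw [fderiv_clm_apply (hdF p) (differentiableAt_const w)]
    simp
  rw [key e, key e']
  simpa using hsymm

/- ### Main theorem -/

theorem shallow_water_negative_flow_conservation_laws
    (P Q : ℝ → ℝ → ℝ → ℝ)
    (hPsmooth : ContDiff ℝ (⊤ : ℕ∞) (fun p : ℝ × ℝ × ℝ => P p.1 p.2.1 p.2.2))
    (hQsmooth : ContDiff ℝ (⊤ : ℕ∞) (fun p : ℝ × ℝ × ℝ => Q p.1 p.2.1 p.2.2))
    (hP : ∀ x y t : ℝ,
      deriv (fun s => dX P x y s) t =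
        dX P x y t * deriv (fun s => dX P x s t) y
        + dX Q x y t * deriv (fun s => dX P x s t) y
        + 2 * dX P x y t * deriv (fun s => dX Q x s t) y
        + deriv (fun s => dX P s y t) x * dY P x y t
        + deriv (fun s => dX P s y t) x * dY Q x y t)
    (hQ : ∀ x y t : ℝ,
      deriv (fun s => dX Q x y s) t =
        dX Q x y t * deriv (fun s => dX Q x s t) y
        + dX P x y t * deriv (fun s => dX Q x s t) y
        + 2 * dX Q x y t * deriv (fun s => dX P x s t) y
        + deriv (fun s => dX Q s y t) x * dY Q x y t
        + deriv (fun s => dX Q s y t) x * dY P x y t)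
    (n : ℕ) (hn : 1 ≤ n) :
    ∃ S : ℝ → ℝ → ℝ, ContDiff ℝ (⊤ : ℕ∞) (fun p : ℝ × ℝ => S p.1 p.2) ∧
      ∀ x y t : ℝ,
        deriv (fun s => Tsw n (dX P x y s) (dX Q x y s)) t =
          deriv (fun s => Tsw n (dX P s y t) (dX Q s y t) * (dY P s y t + dY Q s y t)) x
          + deriv (fun s => S (dX P x s t) (dX Q x s t)) y := by
  set κ : ℝ := (n : ℝ) / ((n : ℝ) + 1) with hκ
  refine ⟨fun a b => κ * Tsw (n + 1) a b, ?_, ?_⟩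
  · -- smoothness of S
    have : ContDiff ℝ (⊤ : ℕ∞) (fun p : ℝ × ℝ => Tsw (n + 1) p.1 p.2) := by
      have : (fun p : ℝ × ℝ => Tsw (n + 1) p.1 p.2)
          = fun p : ℝ × ℝ => ∑ k ∈ range (n + 2),
              cc (n + 1) k * p.1 ^ k * p.2 ^ (n + 1 - k + 1) := rfl
      rw [this]
      exact ContDiff.sum fun k _ =>
        (contDiff_const.mul (contDiff_fst.pow k)).mul (contDiff_snd.pow (n + 1 - k + 1))
    exact contDiff_const.mul this
  · intro x y t
    -- uncurried versions
    set FP : ℝ × ℝ × ℝ → ℝ := fun p => P p.1 p.2.1 p.2.2 with hFP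
    set FQ : ℝ × ℝ × ℝ → ℝ := fun p => Q p.1 p.2.1 p.2.2 with hFQ
    have hFPs : ContDiff ℝ (⊤ : ℕ∞) FP := by rw [hFP]; exact hPsmooth
    have hFQs : ContDiff ℝ (⊤ : ℕ∞) FQ := by rw [hFQ]; exact hQsmooth
    have hdFP : Differentiable ℝ FP := hFPs.differentiable (by simp)
    have hdFQ : Differentiable ℝ FQ := hFQs.differentiable (by simp)
    -- partial derivative functions
    have dgP : Differentiable ℝ (fun p => fderiv ℝ FP p (1, 0, 0)) :=
      (smooth_pd hFPs _).differentiable (by simp)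
    have dgQ : Differentiable ℝ (fun p => fderiv ℝ FQ p (1, 0, 0)) :=
      (smooth_pd hFQs _).differentiable (by simp)
    have dgyP : Differentiable ℝ (fun p => fderiv ℝ FP p (0, 1, 0)) :=
      (smooth_pd hFPs _).differentiable (by simp)
    have dgyQ : Differentiable ℝ (fun p => fderiv ℝ FQ p (0, 1, 0)) :=
      (smooth_pd hFQs _).differentiable (by simp)
    -- rewrite dX/dY via fderiv
    have hdXP : ∀ a b c : ℝ, dX P a b c = fderiv ℝ FP (a, b, c) (1, 0, 0) := by
      intro a b c
      rw [← (slice1 hdFP a b c).deriv]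
      simp only [dX, hFP]
    have hdXQ : ∀ a b c : ℝ, dX Q a b c = fderiv ℝ FQ (a, b, c) (1, 0, 0) := by
      intro a b c
      rw [← (slice1 hdFQ a b c).deriv]
      simp only [dX, hFQ]
    have hdYP : ∀ a b c : ℝ, dY P a b c = fderiv ℝ FP (a, b, c) (0, 1, 0) := by
      intro a b c
      rw [← (slice2 hdFP a b c).deriv]
      simp only [dY, hFP]
    have hdYQ : ∀ a b c : ℝ, dY Q a b c = fderiv ℝ FQ (a, b, c) (0, 1, 0) := by
      intro a b c
      rw [← (slice2 hdFQ a b c).deriv]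
      simp only [dY, hFQ]
    simp only [hdXP, hdXQ, hdYP, hdYQ] at hP hQ ⊢
    -- notation for the point values
    -- HasDerivAt facts
    have hu1 := slice1 dgP x y t
    have hv1 := slice1 dgQ x y t
    have hu2 := slice2 dgP x y t
    have hv2 := slice2 dgQ x y t
    have hu3 := slice3 dgP x y t
    have hv3 := slice3 dgQ x y t
    have hpy1 := slice1 dgyP x y t
    have hqy1 := slice1 dgyQ x y t
    -- the three derivative computations
    have hL : deriv (fun s => Tsw n (fderiv ℝ FP (x, y, s) (1, 0, 0))
          (fderiv ℝ FQ (x, y, s) (1, 0, 0))) t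
        = TU n (fderiv ℝ FP (x, y, t) (1, 0, 0)) (fderiv ℝ FQ (x, y, t) (1, 0, 0))
            * (fderiv ℝ (fun p => fderiv ℝ FP p (1, 0, 0)) (x, y, t) (0, 0, 1))
          + TV n (fderiv ℝ FP (x, y, t) (1, 0, 0)) (fderiv ℝ FQ (x, y, t) (1, 0, 0))
            * (fderiv ℝ (fun p => fderiv ℝ FQ p (1, 0, 0)) (x, y, t) (0, 0, 1)) :=
      (hasDerivAt_Tsw n hu3 hv3).deriv
    have hR1 : deriv (fun s => Tsw n (fderiv ℝ FP (s, y, t) (1, 0, 0))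
          (fderiv ℝ FQ (s, y, t) (1, 0, 0))
          * (fderiv ℝ FP (s, y, t) (0, 1, 0) + fderiv ℝ FQ (s, y, t) (0, 1, 0))) x
        = (TU n (fderiv ℝ FP (x, y, t) (1, 0, 0)) (fderiv ℝ FQ (x, y, t) (1, 0, 0))
            * (fderiv ℝ (fun p => fderiv ℝ FP p (1, 0, 0)) (x, y, t) (1, 0, 0))
          + TV n (fderiv ℝ FP (x, y, t) (1, 0, 0)) (fderiv ℝ FQ (x, y, t) (1, 0, 0))
            * (fderiv ℝ (fun p => fderiv ℝ FQ p (1, 0, 0)) (x, y, t) (1, 0, 0)))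
          * (fderiv ℝ FP (x, y, t) (0, 1, 0) + fderiv ℝ FQ (x, y, t) (0, 1, 0))
          + Tsw n (fderiv ℝ FP (x, y, t) (1, 0, 0)) (fderiv ℝ FQ (x, y, t) (1, 0, 0))
            * (fderiv ℝ (fun p => fderiv ℝ FP p (0, 1, 0)) (x, y, t) (1, 0, 0)
              + fderiv ℝ (fun p => fderiv ℝ FQ p (0, 1, 0)) (x, y, t) (1, 0, 0)) :=
      ((hasDerivAt_Tsw n hu1 hv1).mul (hpy1.add hqy1)).deriv
    have hR2 : deriv (fun s => κ * Tsw (n + 1) (fderiv ℝ FP (x, s, t) (1, 0, 0))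
          (fderiv ℝ FQ (x, s, t) (1, 0, 0))) y
        = κ * (TU (n + 1) (fderiv ℝ FP (x, y, t) (1, 0, 0)) (fderiv ℝ FQ (x, y, t) (1, 0, 0))
            * (fderiv ℝ (fun p => fderiv ℝ FP p (1, 0, 0)) (x, y, t) (0, 1, 0))
          + TV (n + 1) (fderiv ℝ FP (x, y, t) (1, 0, 0)) (fderiv ℝ FQ (x, y, t) (1, 0, 0))
            * (fderiv ℝ (fun p => fderiv ℝ FQ p (1, 0, 0)) (x, y, t) (0, 1, 0))) :=
      ((hasDerivAt_Tsw (n + 1) hu2 hv2).const_mul κ).deriv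
    rw [hL, hR1, hR2]
    -- rewrite the derivs appearing in hP, hQ
    have eP_t := hu3.deriv
    have eP_y := hu2.deriv
    have eP_x := hu1.deriv
    have eQ_t := hv3.deriv
    have eQ_y := hv2.deriv
    have eQ_x := hv1.deriv
    have hPt := hP x y t
    have hQt := hQ x y t
    rw [eP_t, eP_y, eP_x, eQ_y] at hPt
    rw [eQ_t, eQ_y, eQ_x, eP_y] at hQt
    -- Clairaut
    have hclP : fderiv ℝ (fun p => fderiv ℝ FP p (0, 1, 0)) (x, y, t) (1, 0, 0)
        = fderiv ℝ (fun p => fderiv ℝ FP p (1, 0, 0)) (x, y, t) (0, 1, 0) :=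
      pd_comm hFPs (x, y, t) (0, 1, 0) (1, 0, 0)
    have hclQ : fderiv ℝ (fun p => fderiv ℝ FQ p (0, 1, 0)) (x, y, t) (1, 0, 0)
        = fderiv ℝ (fun p => fderiv ℝ FQ p (1, 0, 0)) (x, y, t) (0, 1, 0) :=
      pd_comm hFQs (x, y, t) (0, 1, 0) (1, 0, 0)
    rw [hclP, hclQ, hPt, hQt]
    -- final algebra
    have hA := idA n (fderiv ℝ FP (x, y, t) (1, 0, 0)) (fderiv ℝ FQ (x, y, t) (1, 0, 0))
    have hB := idB n (fderiv ℝ FP (x, y, t) (1, 0, 0)) (fderiv ℝ FQ (x, y, t) (1, 0, 0))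
    rw [← hκ] at hA hB
    linear_combination
      (fderiv ℝ (fun p => fderiv ℝ FP p (1, 0, 0)) (x, y, t) (0, 1, 0)) * hA
      + (fderiv ℝ (fun p => fderiv ℝ FQ p (1, 0, 0)) (x, y, t) (0, 1, 0)) * hB
end

section
/- For every natural number n ≥ 1, with T_n(u,v) = Σ_{k=0}^{n} C(n,k)²·u^k·v^{n-k}, there exists a polynomial (equivalently, a smooth function) G_n(u,v) such that ∂G_n/∂u = v·∂T_n/∂v and ∂G_n/∂v = u·∂T_n/∂u for all real u, v. -/
open Real Finset

/-- Conserved density of the dispersionless Toda hierarchy: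
`T n u v = ∑_{k=0}^{n} C(n,k)^2 * u^k * v^(n-k)`. -/
noncomputable def Ttoda (n : ℕ) (u v : ℝ) : ℝ :=
  ∑ k ∈ Finset.range (n + 1), (n.choose k : ℝ) ^ 2 * u ^ k * v ^ (n - k)

noncomputable def Gtoda (n : ℕ) (u v : ℝ) : ℝ :=
  ∑ k ∈ Finset.range (n + 1), (n.choose k : ℝ) * (n.choose (k+1) : ℝ) * u ^ (k+1) * v ^ (n - k)

lemma key1 (n k : ℕ) : n.choose k * n.choose (k+1) * (k+1) = n.choose k ^ 2 * (n - k) := by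
  rw [pow_two, mul_assoc, mul_assoc, Nat.choose_succ_right_eq]

lemma key2 (n k : ℕ) : n.choose k * n.choose (k+1) * (n - k) = n.choose (k+1) ^ 2 * (k+1) := by
  rw [pow_two]
  conv_rhs => rw [mul_assoc, Nat.choose_succ_right_eq]
  ring

lemma hasDerivAt_T_v (n : ℕ) (u v : ℝ) :
    HasDerivAt (fun w => Ttoda n u w)
      (∑ k ∈ Finset.range (n + 1),
        (n.choose k : ℝ) ^ 2 * u ^ k * ((n - k : ℕ) * v ^ (n - k - 1))) v := by
  unfold Ttoda
  apply HasDerivAt.fun_sum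
  intro k _
  exact (hasDerivAt_pow (n - k) v).const_mul ((n.choose k : ℝ) ^ 2 * u ^ k)

lemma hasDerivAt_T_u (n : ℕ) (u v : ℝ) :
    HasDerivAt (fun w => Ttoda n w v)
      (∑ k ∈ Finset.range (n + 1),
        (n.choose k : ℝ) ^ 2 * ((k : ℝ) * u ^ (k - 1)) * v ^ (n - k)) u := by
  unfold Ttoda
  apply HasDerivAt.fun_sum
  intro k _
  exact ((hasDerivAt_pow k u).const_mul ((n.choose k : ℝ) ^ 2)).mul_const (v ^ (n - k))

lemma hasDerivAt_G_u (n : ℕ) (u v : ℝ) :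
    HasDerivAt (fun u' => Gtoda n u' v)
      (∑ k ∈ Finset.range (n + 1),
        (n.choose k : ℝ) * (n.choose (k+1) : ℝ) * ((k+1 : ℕ) * u ^ k) * v ^ (n - k)) u := by
  unfold Gtoda
  apply HasDerivAt.fun_sum
  intro k _
  have h := ((hasDerivAt_pow (k+1) u).const_mul
      ((n.choose k : ℝ) * (n.choose (k+1) : ℝ))).mul_const (v ^ (n - k))
  simpa using h

lemma hasDerivAt_G_v (n : ℕ) (u v : ℝ) :
    HasDerivAt (fun v' => Gtoda n u v')
      (∑ k ∈ Finset.range (n + 1),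
        (n.choose k : ℝ) * (n.choose (k+1) : ℝ) * u ^ (k+1) * ((n - k : ℕ) * v ^ (n - k - 1))) v := by
  unfold Gtoda
  apply HasDerivAt.fun_sum
  intro k _
  exact (hasDerivAt_pow (n - k) v).const_mul
      ((n.choose k : ℝ) * (n.choose (k+1) : ℝ) * u ^ (k+1))

theorem toda_potential_exists (n : ℕ) (hn : 1 ≤ n) :
    ∃ G : ℝ → ℝ → ℝ, ContDiff ℝ (⊤ : ℕ∞) (fun p : ℝ × ℝ => G p.1 p.2) ∧
      ∀ u v : ℝ,
        HasDerivAt (fun u' => G u' v) (v * deriv (fun w => Ttoda n u w) v) u ∧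
        HasDerivAt (fun v' => G u v') (u * deriv (fun w => Ttoda n w v) u) v := by
  refine ⟨Gtoda n, ?_, ?_⟩
  · unfold Gtoda
    apply ContDiff.sum
    intro k _
    exact ((contDiff_const.mul (contDiff_fst.pow _)).mul (contDiff_snd.pow _))
  · intro u v
    constructor
    · rw [(hasDerivAt_T_v n u v).deriv]
      have h := hasDerivAt_G_u n u v
      have heq : (∑ k ∈ Finset.range (n + 1),
          (n.choose k : ℝ) * (n.choose (k+1) : ℝ) * ((k+1 : ℕ) * u ^ k) * v ^ (n - k))
          = v * ∑ k ∈ Finset.range (n + 1),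
            (n.choose k : ℝ) ^ 2 * u ^ k * ((n - k : ℕ) * v ^ (n - k - 1)) := by
        rw [Finset.mul_sum]
        apply Finset.sum_congr rfl
        intro k hk
        rw [Finset.mem_range] at hk
        by_cases hkn : k = n
        · simp [hkn, Nat.choose_succ_self, Nat.sub_self]
        · have hklt : k < n := lt_of_le_of_ne (Nat.lt_succ_iff.mp hk) hkn
          obtain ⟨m, hm⟩ : ∃ m, n - k = m + 1 := ⟨n - k - 1, by omega⟩
          have hm1 : n - k - 1 = m := by omega
          have hc := congrArg (Nat.cast : ℕ → ℝ) (key1 n k)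
          rw [hm] at hc
          push_cast at hc
          rw [hm1, hm, pow_succ]
          push_cast
          linear_combination (u ^ k * (v ^ m * v)) * hc
      rwa [heq] at h
    · rw [(hasDerivAt_T_u n u v).deriv]
      have h := hasDerivAt_G_v n u v
      have heq : (∑ k ∈ Finset.range (n + 1),
          (n.choose k : ℝ) * (n.choose (k+1) : ℝ) * u ^ (k+1) * ((n - k : ℕ) * v ^ (n - k - 1)))
          = u * ∑ k ∈ Finset.range (n + 1),
            (n.choose k : ℝ) ^ 2 * ((k : ℝ) * u ^ (k - 1)) * v ^ (n - k) := by
        rw [Finset.mul_sum, Finset.sum_range_succ, Finset.sum_range_succ']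
        simp only [Nat.choose_succ_self, Nat.cast_zero, Nat.sub_self, Nat.cast_zero,
          mul_zero, zero_mul, add_zero, pow_zero]
        apply Finset.sum_congr rfl
        intro k hk
        rw [Finset.mem_range] at hk
        obtain ⟨m, hm⟩ : ∃ m, n - k = m + 1 := ⟨n - k - 1, by omega⟩
        have hm1 : n - k - 1 = m := by omega
        have e1 : n - (k+1) = m := by omega
        have e2 : (k+1) - 1 = k := by omega
        have hc := congrArg (Nat.cast : ℕ → ℝ) (key2 n k)
        rw [hm] at hc
        push_cast at hc
        rw [hm1, hm, e1, e2]
        push_cast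
        linear_combination (u ^ (k+1) * v ^ m) * hc
      rwa [heq] at h
end

section
/- Fix a natural number n ≥ 1 and let T_n(u,v) = Σ_{k=0}^{n} C(n,k)²·u^k·v^{n-k}, T_{n1} = ∂T_n/∂u, T_{n2} = ∂T_n/∂v, and let G_n be a function with ∂G_n/∂u = v·∂T_n/∂v and ∂G_n/∂v = u·∂T_n/∂u. Define the functions of two real variables (p,q): A(p,q) = T_{n1}(e^p, e^q)·e^p·(e^p + e^q) + 2·T_{n2}(e^p, e^q)·e^q·e^p − G_n(e^p, e^q) and B(p,q) = T_{n2}(e^p, e^q)·e^q·(e^p + e^q) + 2·T_{n1}(e^p, e^q)·e^q·e^p − G_n(e^p, e^q). Then the exactness condition ∂A/∂q = ∂B/∂p holds for all real p, q. -/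
/-!
In the coordinates `u = eᵖ`, `v = e^q` the Euler operators `u ∂/∂u`, `v ∂/∂v` become `∂/∂p`,
`∂/∂q`, and the integrability conditions of `G` say `∂G/∂q = v θᵤT`, `∂G/∂p = u θᵥT`. Hence
`∂A/∂q = θᵤθᵥT (u + v) + 2u θᵥ²T` and `∂B/∂p = θᵤθᵥT (u + v) + 2v θᵤ²T`, and exactness reduces to
`u θᵥ²Tₙ = v θᵤ²Tₙ`, which follows by shifting the summation index with
`C(n, k+1) (k+1) = C(n, k) (n-k)`.
-/

open Real Finset

/-- `θᵤ^a θᵥ^b Tₙ`, where `θᵤ = u ∂/∂u` and `θᵥ = v ∂/∂v` are the Euler operators. -/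
noncomputable def todaEuler (n a b : ℕ) (u v : ℝ) : ℝ :=
  ∑ k ∈ range (n + 1), (n.choose k : ℝ) ^ 2 * (k : ℝ) ^ a * ((n - k : ℕ) : ℝ) ^ b * u ^ k * v ^ (n - k)

lemma todaEuler_zero_zero (n : ℕ) : todaEuler n 0 0 = Ttoda n := by
  ext u v
  simp [todaEuler, Ttoda]

lemma hasDerivAt_exp_pow (k : ℕ) (p : ℝ) : HasDerivAt (fun p => exp p ^ k) (k * exp p ^ k) p := by
  simpa [← Real.exp_nat_mul, mul_comm] using ((hasDerivAt_id p).const_mul (k : ℝ)).exp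

lemma hasDerivAt_todaEuler_exp_left (n a b : ℕ) (v p : ℝ) :
    HasDerivAt (fun p => todaEuler n a b (exp p) v) (todaEuler n (a + 1) b (exp p) v) p := by
  unfold todaEuler
  refine HasDerivAt.fun_sum fun k _ => ?_
  exact (((hasDerivAt_exp_pow k p).const_mul _).mul_const _).congr_deriv (by ring)

lemma hasDerivAt_todaEuler_exp_right (n a b : ℕ) (u q : ℝ) :
    HasDerivAt (fun q => todaEuler n a b u (exp q)) (todaEuler n a (b + 1) u (exp q)) q := by
  unfold todaEuler
  refine HasDerivAt.fun_sum fun k _ => ?_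
  exact ((hasDerivAt_exp_pow (n - k) q).const_mul _).congr_deriv (by ring)

lemma deriv_Ttoda_left_mul_exp (n : ℕ) (p v : ℝ) :
    deriv (fun w => Ttoda n w v) (exp p) * exp p = todaEuler n 1 0 (exp p) v := by
  have hT : DifferentiableAt ℝ (fun w => Ttoda n w v) (exp p) := by unfold Ttoda; fun_prop
  refine (hT.hasDerivAt.comp p (hasDerivAt_exp p)).unique ?_
  exact todaEuler_zero_zero n ▸ hasDerivAt_todaEuler_exp_left n 0 0 v p

lemma deriv_Ttoda_right_mul_exp (n : ℕ) (u q : ℝ) :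
    deriv (fun w => Ttoda n u w) (exp q) * exp q = todaEuler n 0 1 u (exp q) := by
  have hT : DifferentiableAt ℝ (fun w => Ttoda n u w) (exp q) := by unfold Ttoda; fun_prop
  refine (hT.hasDerivAt.comp q (hasDerivAt_exp q)).unique ?_
  exact todaEuler_zero_zero n ▸ hasDerivAt_todaEuler_exp_right n 0 0 u q

lemma todaEuler_zero_two_mul (n : ℕ) (u v : ℝ) :
    todaEuler n 0 2 u v * u = todaEuler n 2 0 u v * v := by
  unfold todaEuler
  rw [sum_mul, sum_mul, sum_range_succ, sum_range_succ']
  simp only [Nat.sub_self, CharP.cast_eq_zero, zero_pow two_ne_zero, mul_zero, zero_mul, add_zero]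
  refine sum_congr rfl fun k hk => ?_
  have hc : (n.choose (k + 1) : ℝ) * (k + 1) = n.choose k * (n - k : ℕ) := by
    exact_mod_cast Nat.choose_succ_right_eq n k
  rw [show n - k = n - (k + 1) + 1 by grind] at hc ⊢
  push_cast at hc ⊢
  linear_combination (-(u ^ (k + 1) * v ^ (n - (k + 1) + 1))) * congrArg (· ^ 2) hc

theorem toda_exactness_general (n : ℕ) (G : ℝ → ℝ → ℝ)
    (hGu : ∀ u v : ℝ, HasDerivAt (fun u' => G u' v) (v * deriv (fun w => Ttoda n u w) v) u)
    (hGv : ∀ u v : ℝ, HasDerivAt (fun v' => G u v') (u * deriv (fun w => Ttoda n w v) u) v)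
    (p q : ℝ) :
    deriv (fun q' =>
        deriv (fun w => Ttoda n w (Real.exp q')) (Real.exp p) * Real.exp p *
            (Real.exp p + Real.exp q')
          + 2 * deriv (fun w => Ttoda n (Real.exp p) w) (Real.exp q') * Real.exp q' * Real.exp p
          - G (Real.exp p) (Real.exp q')) q =
      deriv (fun p' =>
        deriv (fun w => Ttoda n (Real.exp p') w) (Real.exp q) * Real.exp q *
            (Real.exp p' + Real.exp q)
          + 2 * deriv (fun w => Ttoda n w (Real.exp q)) (Real.exp p') * Real.exp p' * Real.exp q
          - G (Real.exp p') (Real.exp q)) p := by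
  simp only [mul_assoc (2 : ℝ), deriv_Ttoda_left_mul_exp, deriv_Ttoda_right_mul_exp]
  have hGq := (hGv (exp p) (exp q)).comp q (hasDerivAt_exp q)
  have hGp := (hGu (exp p) (exp q)).comp p (hasDerivAt_exp p)
  rw [mul_comm (exp p), deriv_Ttoda_left_mul_exp] at hGq
  rw [mul_comm (exp q), deriv_Ttoda_right_mul_exp] at hGp
  have hA := (((hasDerivAt_todaEuler_exp_right n 1 0 (exp p) q).fun_mul
    ((hasDerivAt_exp q).const_add (exp p))).fun_add
    (((hasDerivAt_todaEuler_exp_right n 0 1 (exp p) q).mul_const (exp p)).const_mul 2)).fun_sub hGq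
  have hB := (((hasDerivAt_todaEuler_exp_left n 0 1 (exp q) p).fun_mul
    ((hasDerivAt_exp p).add_const (exp q))).fun_add
    (((hasDerivAt_todaEuler_exp_left n 1 0 (exp q) p).mul_const (exp q)).const_mul 2)).fun_sub hGp
  refine hA.deriv.trans (Eq.trans ?_ hB.deriv.symm)
  linear_combination 2 * todaEuler_zero_two_mul n (exp p) (exp q)

theorem toda_exactness (n : ℕ) (hn : 1 ≤ n) (G : ℝ → ℝ → ℝ)
    (hGu : ∀ u v : ℝ, HasDerivAt (fun u' => G u' v) (v * deriv (fun w => Ttoda n u w) v) u)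
    (hGv : ∀ u v : ℝ, HasDerivAt (fun v' => G u v') (u * deriv (fun w => Ttoda n w v) u) v)
    (p q : ℝ) :
    deriv (fun q' =>
        deriv (fun w => Ttoda n w (Real.exp q')) (Real.exp p) * Real.exp p *
            (Real.exp p + Real.exp q')
          + 2 * deriv (fun w => Ttoda n (Real.exp p) w) (Real.exp q') * Real.exp q' * Real.exp p
          - G (Real.exp p) (Real.exp q')) q =
      deriv (fun p' =>
        deriv (fun w => Ttoda n (Real.exp p') w) (Real.exp q) * Real.exp q *
            (Real.exp p' + Real.exp q)
          + 2 * deriv (fun w => Ttoda n w (Real.exp q)) (Real.exp p') * Real.exp p' * Real.exp q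
          - G (Real.exp p') (Real.exp q)) p :=
  toda_exactness_general n G hGu hGv p q
end

section
/- Fix a natural number n ≥ 1 and let T_n(u,v) = Σ_{k=0}^{n} C(n,k)²·u^k·v^{n-k}, T_{n1} = ∂T_n/∂u, T_{n2} = ∂T_n/∂v, and let G_n be a function with ∂G_n/∂u = v·∂T_n/∂v and ∂G_n/∂v = u·∂T_n/∂u. Then there exists a smooth function S_n : ℝ² → ℝ of the variables (p,q) such that ∂S_n/∂p = T_{n1}(e^p, e^q)·e^p·(e^p + e^q) + 2·T_{n2}(e^p, e^q)·e^q·e^p − G_n(e^p, e^q) and ∂S_n/∂q = T_{n2}(e^p, e^q)·e^q·(e^p + e^q) + 2·T_{n1}(e^p, e^q)·e^q·e^p − G_n(e^p, e^q) for all real p, q. -/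
open Real Finset

/-! ### Auxiliary definitions -/

/-- Partial derivative of `Ttoda` in the first variable. -/
noncomputable def Tu (n : ℕ) (u v : ℝ) : ℝ :=
  ∑ k ∈ Finset.range (n + 1), (n.choose k : ℝ) ^ 2 * ((k : ℝ) * u ^ (k - 1)) * v ^ (n - k)

/-- Partial derivative of `Ttoda` in the second variable. -/
noncomputable def Tv (n : ℕ) (u v : ℝ) : ℝ :=
  ∑ k ∈ Finset.range (n + 1),
    (n.choose k : ℝ) ^ 2 * u ^ k * (((n - k : ℕ) : ℝ) * v ^ (n - k - 1))

/-- The canonical polynomial potential `G₀` with `∂G₀/∂u = v ∂T/∂v`, `∂G₀/∂v = u ∂T/∂u`. -/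
noncomputable def G0 (n : ℕ) (u v : ℝ) : ℝ :=
  ∑ k ∈ Finset.range (n + 1),
    (n.choose k : ℝ) * (n.choose (k + 1) : ℝ) * u ^ (k + 1) * v ^ (n - k)

noncomputable def alph (n k : ℕ) : ℝ :=
  (((k : ℝ) + 2 * ((n : ℝ) - (k : ℝ))) * (n.choose k : ℝ) ^ 2
    - (n.choose k : ℝ) * (n.choose (k + 1) : ℝ)) / ((k : ℝ) + 1)

noncomputable def bet (n k : ℕ) : ℝ :=
  if k = 0 then (n : ℝ) / ((n : ℝ) + 1) else (n.choose k : ℝ) ^ 2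

lemma hasDerivAt_Ttoda_u (n : ℕ) (u v : ℝ) :
    HasDerivAt (fun w => Ttoda n w v) (Tu n u v) u := by
  unfold Ttoda Tu
  exact HasDerivAt.fun_sum fun k _ => ((hasDerivAt_pow k u).const_mul _).mul_const _

lemma hasDerivAt_Ttoda_v (n : ℕ) (u v : ℝ) :
    HasDerivAt (fun w => Ttoda n u w) (Tv n u v) v := by
  unfold Ttoda Tv
  exact HasDerivAt.fun_sum fun k _ => (hasDerivAt_pow (n - k) v).const_mul _

/-- Cast form of the basic binomial identity. -/
lemma binid (n k : ℕ) (hk : k ≤ n) :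
    (n.choose (k + 1) : ℝ) * ((k : ℝ) + 1) = (n.choose k : ℝ) * ((n : ℝ) - (k : ℝ)) := by
  have h2 := congrArg (Nat.cast (R := ℝ)) (Nat.choose_succ_right_eq n k)
  push_cast [Nat.cast_sub hk] at h2
  linarith [h2]

lemma hasDerivAt_G0_u (n : ℕ) (u v : ℝ) :
    HasDerivAt (fun u' => G0 n u' v) (v * Tv n u v) u := by
  have h : HasDerivAt (fun u' => G0 n u' v)
      (∑ k ∈ Finset.range (n + 1),
        (n.choose k : ℝ) * (n.choose (k + 1) : ℝ) * (((k + 1 : ℕ) : ℝ) * u ^ (k + 1 - 1)) *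
          v ^ (n - k)) u := by
    unfold G0
    exact HasDerivAt.fun_sum fun k _ => ((hasDerivAt_pow (k + 1) u).const_mul _).mul_const _
  have e : (∑ k ∈ Finset.range (n + 1),
        (n.choose k : ℝ) * (n.choose (k + 1) : ℝ) * (((k + 1 : ℕ) : ℝ) * u ^ (k + 1 - 1)) *
          v ^ (n - k)) = v * Tv n u v := by
    rw [Tv, Finset.mul_sum]
    refine Finset.sum_congr rfl fun k hk => ?_
    have hk' : k ≤ n := Nat.lt_succ_iff.mp (Finset.mem_range.mp hk)
    rcases Nat.lt_or_ge k n with h | h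
    · obtain ⟨m, hm⟩ : ∃ m, n - k = m + 1 := ⟨n - k - 1, by omega⟩
      have hb := binid n k hk'
      have hcast : ((n - k : ℕ) : ℝ) = (n : ℝ) - (k : ℝ) := Nat.cast_sub hk'
      rw [hm] at hcast
      rw [← hcast] at hb
      push_cast at hb
      simp only [hm, Nat.add_sub_cancel, pow_succ]
      push_cast
      linear_combination (u ^ k * (v ^ m * v) * (n.choose k : ℝ)) * hb
    · have : k = n := le_antisymm hk' h
      subst this
      simp [Nat.choose_succ_self]
  exact e ▸ h

lemma hasDerivAt_G0_v (n : ℕ) (u v : ℝ) :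
    HasDerivAt (fun v' => G0 n u v') (u * Tu n u v) v := by
  have h : HasDerivAt (fun v' => G0 n u v')
      (∑ k ∈ Finset.range (n + 1),
        (n.choose k : ℝ) * (n.choose (k + 1) : ℝ) * u ^ (k + 1) *
          (((n - k : ℕ) : ℝ) * v ^ (n - k - 1))) v := by
    unfold G0
    exact HasDerivAt.fun_sum fun k _ => (hasDerivAt_pow (n - k) v).const_mul _
  have e : (∑ k ∈ Finset.range (n + 1),
        (n.choose k : ℝ) * (n.choose (k + 1) : ℝ) * u ^ (k + 1) *
          (((n - k : ℕ) : ℝ) * v ^ (n - k - 1))) = u * Tu n u v := by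
    rw [Tu, Finset.mul_sum, Finset.sum_range_succ, Finset.sum_range_succ']
    simp only [Nat.sub_self, Nat.cast_zero, zero_mul, mul_zero, add_zero, Nat.cast_ofNat,
      pow_zero, zero_add]
    refine Finset.sum_congr rfl fun k hk => ?_
    have hkn : k < n := Finset.mem_range.mp hk
    obtain ⟨m, hm⟩ : ∃ m, n - k = m + 1 := ⟨n - k - 1, by omega⟩
    have hb := binid n k hkn.le
    have hcast : ((n - k : ℕ) : ℝ) = (n : ℝ) - (k : ℝ) := Nat.cast_sub hkn.le
    rw [hm] at hcast
    rw [← hcast] at hb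
    push_cast at hb
    rw [show n - (k + 1) = m from by omega, show n - k - 1 = m from by omega, hm]
    push_cast
    rw [pow_succ u k]
    linear_combination (-(u ^ k * u * v ^ m * (n.choose (k + 1) : ℝ))) * hb
  exact e ▸ h

/-- First flux identity, termwise. -/
lemma eq1 (n : ℕ) (hn : 1 ≤ n) (u v : ℝ) :
    ∑ k ∈ Finset.range (n + 1),
      (alph n k * (((k + 1 : ℕ) : ℝ) * u ^ (k + 1 - 1) * u) * v ^ (n - k)
        + bet n k * ((k : ℝ) * u ^ (k - 1) * u) * v ^ (n + 1 - k))
    = Tu n u v * u * (u + v) + 2 * Tv n u v * v * u - G0 n u v := by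
  rw [Tu, Tv, G0]
  simp only [Finset.sum_mul, Finset.mul_sum]
  rw [← Finset.sum_add_distrib, ← Finset.sum_sub_distrib]
  refine Finset.sum_congr rfl fun k hk => ?_
  have hk' : k ≤ n := Nat.lt_succ_iff.mp (Finset.mem_range.mp hk)
  rcases k with _ | j
  · -- k = 0
    simp only [Nat.cast_zero, zero_mul, mul_zero, add_zero, pow_zero, Nat.zero_add,
      Nat.sub_zero, Nat.cast_one, Nat.choose_zero_right, Nat.choose_one_right, one_mul,
      Nat.add_sub_cancel, pow_one, one_pow]
    have hpow : v ^ (n - 1) * v = v ^ n := by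
      rw [← pow_succ, show n - 1 + 1 = n from by omega]
    have hA : alph n 0 = (n : ℝ) := by
      simp [alph, Nat.choose_zero_right, Nat.choose_one_right]
      ring
    rw [hA]
    norm_num
    linear_combination (-(2 * (n : ℝ) * u)) * hpow
  · -- k = j+1
    have hb : bet n (j + 1) = (n.choose (j + 1) : ℝ) ^ 2 := if_neg (Nat.succ_ne_zero j)
    have hA : alph n (j + 1) * (((j : ℝ) + 1) + 1)
        = (((j : ℝ) + 1) + 2 * ((n : ℝ) - ((j : ℝ) + 1))) * (n.choose (j + 1) : ℝ) ^ 2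
          - (n.choose (j + 1) : ℝ) * (n.choose (j + 2) : ℝ) := by
      rw [alph]
      push_cast
      field_simp
    rcases Nat.lt_or_ge (j + 1) n with h | h
    · -- j+1 < n
      obtain ⟨m, hm⟩ : ∃ m, n - (j + 1) = m + 1 := ⟨n - (j + 1) - 1, by omega⟩
      have hmn : (n : ℝ) = (j : ℝ) + (m : ℝ) + 2 := by
        have : n = j + m + 2 := by omega
        exact_mod_cast congrArg (Nat.cast (R := ℝ)) this
      rw [hb, hm, show n + 1 - (j + 1) = m + 2 from by omega]
      simp only [Nat.add_sub_cancel]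
      rw [show j + 1 + 1 = j + 2 from rfl]
      push_cast
      rw [hmn] at hA
      linear_combination (u ^ (j + 1) * u * v ^ (m + 1)) * hA
    · -- j+1 = n
      have hkn : j + 1 = n := le_antisymm hk' h
      subst hkn
      simp only [Nat.sub_self, Nat.cast_zero, zero_mul, mul_zero, pow_zero,
        Nat.choose_succ_self, Nat.cast_zero, Nat.add_sub_cancel]
      rw [hb]
      rw [show j + 1 + 1 - (j + 1) = 1 from by omega, pow_one]
      have h1 : u ^ (j + 1) = u ^ j * u := pow_succ u j
      rw [h1]
      push_cast at hA ⊢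
      simp only [show j + 2 = j + 1 + 1 from rfl, Nat.choose_succ_self, Nat.cast_zero] at hA ⊢
      linear_combination (u ^ j * u * u) * hA

noncomputable def dd (n : ℕ) (u v : ℝ) (k : ℕ) : ℝ :=
  alph n k * u ^ (k + 1) * (((n - k : ℕ) : ℝ) * v ^ (n - k - 1) * v)
  - (n.choose k : ℝ) ^ 2 * u ^ k * (((n - k : ℕ) : ℝ) * v ^ (n - k - 1)) * v * u
  + (n.choose k : ℝ) * (n.choose (k + 1) : ℝ) * u ^ (k + 1) * v ^ (n - k)

noncomputable def ee (n : ℕ) (u v : ℝ) (k : ℕ) : ℝ :=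
  (n.choose k : ℝ) ^ 2 * u ^ k * (((n - k : ℕ) : ℝ) * v ^ (n - k - 1)) * v * v
  + 2 * ((n.choose k : ℝ) ^ 2 * ((k : ℝ) * u ^ (k - 1)) * v ^ (n - k)) * v * u
  - bet n k * u ^ k * (((n + 1 - k : ℕ) : ℝ) * v ^ (n + 1 - k - 1) * v)

lemma dd_eq_ee_succ (n : ℕ) (u v : ℝ) (k : ℕ) (hk : k < n) :
    dd n u v k = ee n u v (k + 1) := by
  have hb := binid n k hk.le
  have hb1 : ((n : ℝ) - (k : ℝ)) ≠ 0 := by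
    have : (k : ℝ) < (n : ℝ) := by exact_mod_cast hk
    linarith
  have hx : (n.choose k : ℝ) = (n.choose (k + 1) : ℝ) * ((k : ℝ) + 1) / ((n : ℝ) - (k : ℝ)) := by
    field_simp
    linarith [hb]
  obtain ⟨m, hm⟩ : ∃ m, n - k = m + 1 := ⟨n - k - 1, by omega⟩
  have hnk : ((n - k : ℕ) : ℝ) = (n : ℝ) - (k : ℝ) := Nat.cast_sub hk.le
  have hbet : bet n (k + 1) = (n.choose (k + 1) : ℝ) ^ 2 := if_neg (Nat.succ_ne_zero k)
  unfold dd ee alph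
  rw [hbet, show n - k - 1 = m from by omega, show n + 1 - (k + 1) - 1 = m from by omega,
    show n - (k + 1) - 1 = m - 1 from by omega, show n - (k + 1) = m from by omega,
    show n + 1 - (k + 1) = m + 1 from by omega, hm, Nat.add_sub_cancel]
  have hnr : (n : ℝ) = (k : ℝ) + (m : ℝ) + 1 := by
    have : n = k + m + 1 := by omega
    exact_mod_cast congrArg (Nat.cast (R := ℝ)) this
  rw [hnr] at hx ⊢
  rcases m with _ | m'
  · -- m = 0 : k = n-1
    simp only [Nat.cast_zero, Nat.sub_self, pow_zero, Nat.cast_one, Nat.cast_zero] at hx ⊢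
    rw [hx]
    have h1 : ((k : ℝ) + 1) ≠ 0 := by positivity
    field_simp
    push_cast
    ring
  · -- m = m' + 1
    rw [show m' + 1 - 1 = m' from by omega]
    rw [hx]
    have h1 : ((k : ℝ) + 1) ≠ 0 := by positivity
    have h2 : ((k : ℝ) + ((m' : ℝ) + 1) + 1) - (k : ℝ) ≠ 0 := by
      have : ((k : ℝ) + ((m' : ℝ) + 1) + 1) - (k : ℝ) = (m' : ℝ) + 2 := by ring
      rw [this]; positivity
    push_cast at h2 ⊢
    field_simp
    ring

lemma sum_dd_eq_sum_ee (n : ℕ) (hn : 1 ≤ n) (u v : ℝ) :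
    ∑ k ∈ Finset.range (n + 1), dd n u v k = ∑ k ∈ Finset.range (n + 1), ee n u v k := by
  rw [Finset.sum_range_succ, Finset.sum_range_succ']
  have hdn : dd n u v n = 0 := by
    simp [dd, Nat.sub_self, Nat.choose_succ_self]
  have he0 : ee n u v 0 = 0 := by
    have hb0 : bet n 0 = (n : ℝ) / ((n : ℝ) + 1) := if_pos rfl
    have hpow : v ^ (n - 1) * v = v ^ n := by
      rw [← pow_succ, show n - 1 + 1 = n from by omega]
    have hn1 : ((n : ℝ) + 1) ≠ 0 := by positivity
    simp only [ee, hb0, Nat.sub_zero, pow_zero, Nat.cast_zero, zero_mul, mul_zero, add_zero,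
      one_mul, Nat.add_sub_cancel]
    push_cast
    field_simp
    simp only [Nat.choose_zero_right, Nat.cast_one, one_pow, mul_one]
    linear_combination ((n : ℝ) * v) * hpow
  rw [hdn, he0, add_zero, add_zero]
  exact Finset.sum_congr rfl fun k hk => dd_eq_ee_succ n u v k (Finset.mem_range.mp hk)

/-- Second flux identity (requires an index shift). -/
lemma eq2 (n : ℕ) (hn : 1 ≤ n) (u v : ℝ) :
    ∑ k ∈ Finset.range (n + 1),
      (alph n k * u ^ (k + 1) * (((n - k : ℕ) : ℝ) * v ^ (n - k - 1) * v)
        + bet n k * u ^ k * (((n + 1 - k : ℕ) : ℝ) * v ^ (n + 1 - k - 1) * v))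
    = Tv n u v * v * (u + v) + 2 * Tu n u v * v * u - G0 n u v := by
  rw [Tv, Tu, G0]
  simp only [Finset.sum_mul, Finset.mul_sum]
  rw [← Finset.sum_add_distrib, ← Finset.sum_sub_distrib, ← sub_eq_zero,
    ← Finset.sum_sub_distrib]
  have h := sum_dd_eq_sum_ee n hn u v
  calc (∑ k ∈ Finset.range (n+1), _) = ∑ k ∈ Finset.range (n + 1), (dd n u v k - ee n u v k) := by
        refine Finset.sum_congr rfl fun k _ => ?_
        unfold dd ee
        ring
    _ = 0 := by rw [Finset.sum_sub_distrib, h, sub_self]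

theorem toda_flux_potential_exists (n : ℕ) (hn : 1 ≤ n) (G : ℝ → ℝ → ℝ)
    (hGu : ∀ u v : ℝ, HasDerivAt (fun u' => G u' v) (v * deriv (fun w => Ttoda n u w) v) u)
    (hGv : ∀ u v : ℝ, HasDerivAt (fun v' => G u v') (u * deriv (fun w => Ttoda n w v) u) v) :
    ∃ S : ℝ → ℝ → ℝ, ContDiff ℝ (⊤ : ℕ∞) (fun r : ℝ × ℝ => S r.1 r.2) ∧
      ∀ p q : ℝ,
        HasDerivAt (fun p' => S p' q)
          (deriv (fun w => Ttoda n w (Real.exp q)) (Real.exp p) * Real.exp p *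
              (Real.exp p + Real.exp q)
            + 2 * deriv (fun w => Ttoda n (Real.exp p) w) (Real.exp q) * Real.exp q * Real.exp p
            - G (Real.exp p) (Real.exp q)) p ∧
        HasDerivAt (fun q' => S p q')
          (deriv (fun w => Ttoda n (Real.exp p) w) (Real.exp q) * Real.exp q *
              (Real.exp p + Real.exp q)
            + 2 * deriv (fun w => Ttoda n w (Real.exp q)) (Real.exp p) * Real.exp q * Real.exp p
            - G (Real.exp p) (Real.exp q)) q := by
  have hTu : ∀ u v : ℝ, deriv (fun w => Ttoda n w v) u = Tu n u v :=
    fun u v => (hasDerivAt_Ttoda_u n u v).deriv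
  have hTv : ∀ u v : ℝ, deriv (fun w => Ttoda n u w) v = Tv n u v :=
    fun u v => (hasDerivAt_Ttoda_v n u v).deriv
  set c : ℝ := G 1 1 - G0 n 1 1 with hc
  -- G = G0 + c
  have hconst : ∀ u v : ℝ, G u v = G0 n u v + c := by
    have hdiff1 : ∀ v u : ℝ, HasDerivAt (fun u' => G u' v - G0 n u' v) 0 u := by
      intro v u
      have h1 := hGu u v
      rw [hTv] at h1
      simpa using h1.fun_sub (hasDerivAt_G0_u n u v)
    have hdiff2 : ∀ u v : ℝ, HasDerivAt (fun v' => G u v' - G0 n u v') 0 v := by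
      intro u v
      have h1 := hGv u v
      rw [hTu] at h1
      simpa using h1.fun_sub (hasDerivAt_G0_v n u v)
    have h2 : ∀ v u u' : ℝ, G u v - G0 n u v = G u' v - G0 n u' v := fun v u u' =>
      is_const_of_deriv_eq_zero (fun x => (hdiff1 v x).differentiableAt)
        (fun x => (hdiff1 v x).deriv) u u'
    have h3 : ∀ v v' : ℝ, G 1 v - G0 n 1 v = G 1 v' - G0 n 1 v' := fun v v' =>
      is_const_of_deriv_eq_zero (fun x => (hdiff2 1 x).differentiableAt)
        (fun x => (hdiff2 1 x).deriv) v v'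
    intro u v
    have := (h2 v u 1).trans (h3 v 1)
    rw [hc]
    linarith [this]
  refine ⟨fun p q =>
    (∑ k ∈ Finset.range (n + 1),
      (alph n k * Real.exp p ^ (k + 1) * Real.exp q ^ (n - k)
        + bet n k * Real.exp p ^ k * Real.exp q ^ (n + 1 - k))) - c * (p + q), ?_, ?_⟩
  · -- smoothness
    apply ContDiff.sub
    · apply ContDiff.sum
      intro k _
      fun_prop
    · fun_prop
  · intro p q
    constructor
    · -- derivative in p
      have hS : HasDerivAt (fun p' =>
          (∑ k ∈ Finset.range (n + 1),
            (alph n k * Real.exp p' ^ (k + 1) * Real.exp q ^ (n - k)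
              + bet n k * Real.exp p' ^ k * Real.exp q ^ (n + 1 - k))) - c * (p' + q))
          ((∑ k ∈ Finset.range (n + 1),
            (alph n k * (((k + 1 : ℕ) : ℝ) * Real.exp p ^ (k + 1 - 1) * Real.exp p)
                * Real.exp q ^ (n - k)
              + bet n k * ((k : ℝ) * Real.exp p ^ (k - 1) * Real.exp p)
                * Real.exp q ^ (n + 1 - k))) - c * 1) p := by
        refine HasDerivAt.sub (HasDerivAt.fun_sum fun k _ => HasDerivAt.add ?_ ?_) ?_
        · exact (((Real.hasDerivAt_exp p).pow (k + 1)).const_mul (alph n k)).mul_const _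
        · exact (((Real.hasDerivAt_exp p).pow k).const_mul (bet n k)).mul_const _
        · exact ((hasDerivAt_id p).add_const q).const_mul c
      have e : (∑ k ∈ Finset.range (n + 1),
            (alph n k * (((k + 1 : ℕ) : ℝ) * Real.exp p ^ (k + 1 - 1) * Real.exp p)
                * Real.exp q ^ (n - k)
              + bet n k * ((k : ℝ) * Real.exp p ^ (k - 1) * Real.exp p)
                * Real.exp q ^ (n + 1 - k))) - c * 1
          = deriv (fun w => Ttoda n w (Real.exp q)) (Real.exp p) * Real.exp p *
              (Real.exp p + Real.exp q)
            + 2 * deriv (fun w => Ttoda n (Real.exp p) w) (Real.exp q) * Real.exp q * Real.exp p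
            - G (Real.exp p) (Real.exp q) := by
        rw [hTu, hTv, hconst, eq1 n hn (Real.exp p) (Real.exp q)]
        ring
      exact e ▸ hS
    · -- derivative in q
      have hS : HasDerivAt (fun q' =>
          (∑ k ∈ Finset.range (n + 1),
            (alph n k * Real.exp p ^ (k + 1) * Real.exp q' ^ (n - k)
              + bet n k * Real.exp p ^ k * Real.exp q' ^ (n + 1 - k))) - c * (p + q'))
          ((∑ k ∈ Finset.range (n + 1),
            (alph n k * Real.exp p ^ (k + 1)
                * (((n - k : ℕ) : ℝ) * Real.exp q ^ (n - k - 1) * Real.exp q)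
              + bet n k * Real.exp p ^ k
                * (((n + 1 - k : ℕ) : ℝ) * Real.exp q ^ (n + 1 - k - 1) * Real.exp q)))
            - c * 1) q := by
        refine HasDerivAt.sub (HasDerivAt.fun_sum fun k _ => HasDerivAt.add ?_ ?_) ?_
        · exact ((Real.hasDerivAt_exp q).pow (n - k)).const_mul _
        · exact ((Real.hasDerivAt_exp q).pow (n + 1 - k)).const_mul _
        · exact ((hasDerivAt_id q).const_add p).const_mul c
      have e : (∑ k ∈ Finset.range (n + 1),
            (alph n k * Real.exp p ^ (k + 1)
                * (((n - k : ℕ) : ℝ) * Real.exp q ^ (n - k - 1) * Real.exp q)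
              + bet n k * Real.exp p ^ k
                * (((n + 1 - k : ℕ) : ℝ) * Real.exp q ^ (n + 1 - k - 1) * Real.exp q)))
            - c * 1
          = deriv (fun w => Ttoda n (Real.exp p) w) (Real.exp q) * Real.exp q *
              (Real.exp p + Real.exp q)
            + 2 * deriv (fun w => Ttoda n w (Real.exp q)) (Real.exp p) * Real.exp q * Real.exp p
            - G (Real.exp p) (Real.exp q) := by
        rw [hTu, hTv, hconst, eq2 n hn (Real.exp p) (Real.exp q)]
        ring
      exact e ▸ hS
end

section
/- Let P, Q : ℝ³ → ℝ be smooth functions of the variables (x, y, t) satisfying the system P_{xt} = P_{xy}·(e^{P_x} + e^{Q_x}) + 2·Q_{xy}·e^{Q_x} + Q_{xx}·e^{Q_x}·(P_y + Q_y) and Q_{xt} = Q_{xy}·(e^{Q_x} + e^{P_x}) + 2·P_{xy}·e^{P_x} + P_{xx}·e^{P_x}·(P_y + Q_y). Then for every natural number n ≥ 1 there exist smooth functions G_n and S_n of two real variables such that the local conservation law ∂_t [T_n(e^{P_x}, e^{Q_x})] = ∂_x [G_n(e^{P_x}, e^{Q_x})·(P_y + Q_y)] + ∂_y [S_n(P_x,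 Q_x)] holds identically, where T_n(u,v) = Σ_{k=0}^{n} C(n,k)²·u^k·v^{n-k}. In particular, the system admits an infinite set of conservation laws. -/
open Real Finset

section helpers
variable {F : ℝ × ℝ × ℝ → ℝ}

lemma hasDerivAt_slice1 {g : ℝ × ℝ × ℝ → ℝ} {x y t : ℝ}
    (hg : DifferentiableAt ℝ g (x, y, t)) :
    HasDerivAt (fun s => g (s, y, t)) (fderiv ℝ g (x, y, t) (1, 0, 0)) x := by
  have hι : HasDerivAt (fun s : ℝ => ((s, y, t) : ℝ × ℝ × ℝ)) ((1:ℝ), (0:ℝ), (0:ℝ)) x :=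
    (hasDerivAt_id x).prodMk ((hasDerivAt_const x y).prodMk (hasDerivAt_const x t))
  exact hg.hasFDerivAt.comp_hasDerivAt x hι

lemma hasDerivAt_slice2 {g : ℝ × ℝ × ℝ → ℝ} {x y t : ℝ}
    (hg : DifferentiableAt ℝ g (x, y, t)) :
    HasDerivAt (fun s => g (x, s, t)) (fderiv ℝ g (x, y, t) (0, 1, 0)) y := by
  have hι : HasDerivAt (fun s : ℝ => ((x, s, t) : ℝ × ℝ × ℝ)) ((0:ℝ), (1:ℝ), (0:ℝ)) y :=
    (hasDerivAt_const y x).prodMk ((hasDerivAt_id y).prodMk (hasDerivAt_const y t))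
  exact hg.hasFDerivAt.comp_hasDerivAt y hι

lemma hasDerivAt_slice3 {g : ℝ × ℝ × ℝ → ℝ} {x y t : ℝ}
    (hg : DifferentiableAt ℝ g (x, y, t)) :
    HasDerivAt (fun s => g (x, y, s)) (fderiv ℝ g (x, y, t) (0, 0, 1)) t := by
  have hι : HasDerivAt (fun s : ℝ => ((x, y, s) : ℝ × ℝ × ℝ)) ((0:ℝ), (0:ℝ), (1:ℝ)) t :=
    (hasDerivAt_const t x).prodMk ((hasDerivAt_const t y).prodMk (hasDerivAt_id t))
  exact hg.hasFDerivAt.comp_hasDerivAt t hι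

/-- applied second derivative path lemmas -/
lemma hasDerivAt_fderiv_slice1 (hF : ContDiff ℝ (⊤ : ℕ∞) F) (x y t : ℝ) (w : ℝ × ℝ × ℝ) :
    HasDerivAt (fun s => fderiv ℝ F (s, y, t) w)
      (fderiv ℝ (fderiv ℝ F) (x, y, t) (1, 0, 0) w) x := by
  have hF' : ContDiff ℝ (⊤ : ℕ∞) (fderiv ℝ F) := hF.fderiv_right (by simp)
  have hι : HasDerivAt (fun s : ℝ => ((s, y, t) : ℝ × ℝ × ℝ)) ((1:ℝ), (0:ℝ), (0:ℝ)) x :=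
    (hasDerivAt_id x).prodMk ((hasDerivAt_const x y).prodMk (hasDerivAt_const x t))
  have h1 : HasDerivAt (fun s => fderiv ℝ F (s, y, t))
      (fderiv ℝ (fderiv ℝ F) (x, y, t) (1, 0, 0)) x :=
    ((hF'.differentiable (by simp)) (x, y, t)).hasFDerivAt.comp_hasDerivAt x hι
  simpa using h1.clm_apply (hasDerivAt_const x w)

lemma hasDerivAt_fderiv_slice2 (hF : ContDiff ℝ (⊤ : ℕ∞) F) (x y t : ℝ) (w : ℝ × ℝ × ℝ) :
    HasDerivAt (fun s => fderiv ℝ F (x, s, t) w)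
      (fderiv ℝ (fderiv ℝ F) (x, y, t) (0, 1, 0) w) y := by
  have hF' : ContDiff ℝ (⊤ : ℕ∞) (fderiv ℝ F) := hF.fderiv_right (by simp)
  have hι : HasDerivAt (fun s : ℝ => ((x, s, t) : ℝ × ℝ × ℝ)) ((0:ℝ), (1:ℝ), (0:ℝ)) y :=
    (hasDerivAt_const y x).prodMk ((hasDerivAt_id y).prodMk (hasDerivAt_const y t))
  have h1 : HasDerivAt (fun s => fderiv ℝ F (x, s, t))
      (fderiv ℝ (fderiv ℝ F) (x, y, t) (0, 1, 0)) y :=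
    ((hF'.differentiable (by simp)) (x, y, t)).hasFDerivAt.comp_hasDerivAt y hι
  simpa using h1.clm_apply (hasDerivAt_const y w)

/-- symmetry of second derivative -/
lemma symm_second (hF : ContDiff ℝ (⊤ : ℕ∞) F) (p : ℝ × ℝ × ℝ) (v w : ℝ × ℝ × ℝ) :
    fderiv ℝ (fderiv ℝ F) p v w = fderiv ℝ (fderiv ℝ F) p w v := by
  have hF' : ContDiff ℝ (⊤ : ℕ∞) (fderiv ℝ F) := hF.fderiv_right (by simp)
  exact second_derivative_symmetric
    (fun z => ((hF.differentiable (by simp)) z).hasFDerivAt)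
    (((hF'.differentiable (by simp)) p).hasFDerivAt) v w
end helpers


noncomputable def aa (n k : ℕ) : ℝ := ((n.choose k : ℝ))^2
noncomputable def bb (n k : ℕ) : ℝ := (n.choose k : ℝ) * (n.choose (k+1) : ℝ)
noncomputable def hcoef (n k : ℕ) : ℝ :=
  (2*(n:ℝ) - k) * aa n k - bb n k + ((k:ℝ)+1) * aa n (k+1)
noncomputable def sscoef (n k : ℕ) : ℝ := hcoef n k / ((k:ℝ)+1)

lemma castR (n k : ℕ) (hk : k ≤ n) :
    ((n.choose (k+1) : ℝ)) * ((k:ℝ)+1) = (n.choose k : ℝ) * ((n:ℝ)-k) := by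
  have h := Nat.choose_succ_right_eq n k
  have h' : ((n.choose (k+1) * (k+1) : ℕ) : ℝ) = ((n.choose k * (n - k) : ℕ) : ℝ) := by
    exact_mod_cast h
  push_cast [Nat.cast_sub hk] at h'
  linarith [h']

lemma R1 (n k : ℕ) (hk : k ≤ n) : ((k:ℝ)+1) * bb n k = ((n:ℝ)-(k:ℝ)) * aa n k := by
  have h := castR n k hk
  unfold bb aa
  linear_combination (n.choose k : ℝ) * h

lemma R2 (n k : ℕ) (hk : k ≤ n) : ((k:ℝ)+1) * aa n (k+1) = ((n:ℝ)-(k:ℝ)) * bb n k := by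
  have h := castR n k hk
  unfold bb aa
  linear_combination (n.choose (k+1) : ℝ) * h

lemma ss_mul (n k : ℕ) : ((k:ℝ)+1) * sscoef n k = hcoef n k := by
  have hne : ((k:ℝ)+1) ≠ 0 := by positivity
  unfold sscoef
  field_simp

lemma ss_n_sub (n k : ℕ) (hk : k ≤ n) :
    ((n:ℝ)-k) * sscoef n k
      = ((n:ℝ)-k) * aa n k - bb n k + ((n:ℝ)+k+1) * aa n (k+1) := by
  have hne : ((k:ℝ)+1) ≠ 0 := by positivity
  have h1 := R1 n k hk
  have h2 := R2 n k hk
  have key : ((n:ℝ)-k) * hcoef n k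
      = ((k:ℝ)+1) * (((n:ℝ)-k) * aa n k - bb n k + ((n:ℝ)+k+1) * aa n (k+1)) := by
    unfold hcoef
    linear_combination (1-2*((n:ℝ)-k)) * h1 + (1-2*((k:ℝ)+1)) * h2
  rw [sscoef, ← mul_div_assoc, key, mul_div_cancel_left₀ _ hne]

lemma shiftA (n : ℕ) (u v : ℝ) (c : ℕ → ℝ) (htop : c (n+1) = 0) :
    ∑ k ∈ Finset.range (n+1), c k * u^k * v^(n-k+1)
      = (∑ k ∈ Finset.range (n+1), c (k+1) * u^(k+1) * v^(n-k)) + c 0 * v^(n+1) := by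
  rw [Finset.sum_range_succ' (fun k => c k * u^k * v^(n-k+1)) n,
      Finset.sum_range_succ (fun k => c (k+1) * u^(k+1) * v^(n-k)) n]
  rw [htop]
  simp only [zero_mul, add_zero, pow_zero, mul_one, Nat.sub_zero]
  congr 1
  apply Finset.sum_congr rfl
  intro k hk
  have hk' : k < n := Finset.mem_range.1 hk
  have he : n - (k+1) + 1 = n - k := by omega
  rw [he]

lemma Id1 (n : ℕ) (u v : ℝ) :
    ∑ k ∈ Finset.range (n+1), (↑(n-k) : ℝ) * aa n k * u^(k+1) * v^(n-k)
      = ∑ k ∈ Finset.range n, (↑(k+1) : ℝ) * bb n k * u^(k+1) * v^(n-k) := by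
  rw [Finset.sum_range_succ]
  simp only [Nat.sub_self, Nat.cast_zero, zero_mul, add_zero]
  apply Finset.sum_congr rfl
  intro k hk
  have hk' : k ≤ n := le_of_lt (Finset.mem_range.1 hk)
  have h1 := R1 n k hk'
  rw [Nat.cast_sub hk']
  push_cast
  linear_combination (-(u^(k+1) * v^(n-k))) * h1

lemma Id2 (n : ℕ) (u v : ℝ) :
    ∑ k ∈ Finset.range (n+1), (k : ℝ) * aa n k * u^k * v^(n-k+1)
      = ∑ k ∈ Finset.range n, (↑(n-k) : ℝ) * bb n k * u^(k+1) * v^(n-k) := by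
  rw [shiftA n u v (fun k => (k:ℝ) * aa n k) (by simp [aa, Nat.choose_succ_self])]
  simp only [Nat.cast_zero, zero_mul, add_zero]
  rw [Finset.sum_range_succ]
  have hz : ((n+1 : ℕ) : ℝ) * aa n (n+1) * u^(n+1) * v^(n-n) = 0 := by
    simp [aa, Nat.choose_succ_self]
  push_cast at hz ⊢
  rw [hz, add_zero]
  apply Finset.sum_congr rfl
  intro k hk
  have hk' : k ≤ n := le_of_lt (Finset.mem_range.1 hk)
  have h2 := R2 n k hk'
  rw [Nat.cast_sub hk']
  linear_combination (u^(k+1) * v^(n-k)) * h2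

lemma Gext (n : ℕ) (u v : ℝ) :
    ∑ k ∈ Finset.range n, bb n k * u^(k+1) * v^(n-k)
      = ∑ k ∈ Finset.range (n+1), bb n k * u^(k+1) * v^(n-k) := by
  rw [Finset.sum_range_succ]
  simp [bb, Nat.choose_succ_self]

lemma Id3 (n : ℕ) (u v : ℝ) :
    (∑ k ∈ Finset.range (n+1), (k : ℝ) * aa n k * u^(k+1) * v^(n-k))
      + (∑ k ∈ Finset.range (n+1), (k : ℝ) * aa n k * u^k * v^(n-k+1))
      + 2 * (∑ k ∈ Finset.range (n+1), (↑(n-k) : ℝ) * aa n k * u^(k+1) * v^(n-k))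
    = (∑ k ∈ Finset.range n, bb n k * u^(k+1) * v^(n-k))
      + ∑ k ∈ Finset.range (n+1), (↑(k+1) : ℝ) * sscoef n k * u^(k+1) * v^(n-k) := by
  rw [shiftA n u v (fun k => (k:ℝ) * aa n k) (by simp [aa, Nat.choose_succ_self])]
  simp only [Nat.cast_zero, zero_mul, add_zero]
  rw [Gext, Finset.mul_sum, ← Finset.sum_add_distrib, ← Finset.sum_add_distrib,
      ← Finset.sum_add_distrib]
  apply Finset.sum_congr rfl
  intro k hk
  have hk' : k ≤ n := Nat.lt_succ_iff.1 (Finset.mem_range.1 hk)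
  have hss := ss_mul n k
  rw [hcoef] at hss
  rw [Nat.cast_sub hk']
  push_cast
  linear_combination (-(u^(k+1) * v^(n-k))) * hss

lemma Id4 (n : ℕ) (u v : ℝ) :
    2 * (∑ k ∈ Finset.range (n+1), (k : ℝ) * aa n k * u^k * v^(n-k+1))
      + (∑ k ∈ Finset.range (n+1), (↑(n-k) : ℝ) * aa n k * u^(k+1) * v^(n-k))
      + (∑ k ∈ Finset.range (n+1), (↑(n-k) : ℝ) * aa n k * u^k * v^(n-k+1))
    = (∑ k ∈ Finset.range n, bb n k * u^(k+1) * v^(n-k))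
      + (∑ k ∈ Finset.range (n+1), (↑(n-k) : ℝ) * sscoef n k * u^(k+1) * v^(n-k))
      + (n : ℝ) * v^(n+1) := by
  rw [shiftA n u v (fun k => (k:ℝ) * aa n k) (by simp [aa, Nat.choose_succ_self])]
  rw [shiftA n u v (fun k => (↑(n-k) : ℝ) * aa n k) (by simp [aa, Nat.choose_succ_self])]
  simp only [Nat.cast_zero, zero_mul, add_zero, Nat.sub_zero]
  have haa0 : aa n 0 = 1 := by simp [aa]
  rw [haa0, mul_one]
  rw [Gext, Finset.mul_sum]
  have hterm : ∑ k ∈ Finset.range (n+1),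
        (2 * ((↑(k+1) : ℝ) * aa n (k+1) * u^(k+1) * v^(n-k))
          + (↑(n-k) : ℝ) * aa n k * u^(k+1) * v^(n-k)
          + (↑(n-(k+1)) : ℝ) * aa n (k+1) * u^(k+1) * v^(n-k))
      = ∑ k ∈ Finset.range (n+1),
        (bb n k * u^(k+1) * v^(n-k) + (↑(n-k) : ℝ) * sscoef n k * u^(k+1) * v^(n-k)) := by
    apply Finset.sum_congr rfl
    intro k hk
    have hk' : k ≤ n := Nat.lt_succ_iff.1 (Finset.mem_range.1 hk)
    rcases eq_or_lt_of_le hk' with rfl | hlt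
    · simp [aa, bb, Nat.choose_succ_self, Nat.sub_self]
    · have hss2 := ss_n_sub n k hk'
      have hcast1 : (↑(n-k) : ℝ) = (n:ℝ) - k := Nat.cast_sub hk'
      have hcast2 : (↑(n-(k+1)) : ℝ) = (n:ℝ) - k - 1 := by
        rw [Nat.cast_sub hlt]; push_cast; ring
      rw [hcast1, hcast2]
      push_cast
      linear_combination (-(u^(k+1) * v^(n-k))) * hss2
  simp only [Finset.sum_add_distrib] at hterm
  linarith [hterm]

lemma m1' (m : ℕ) (w c : ℝ) : (m:ℝ) * w^(m-1) * (w * c) = (m:ℝ) * w^m * c := by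
  cases m with
  | zero => simp
  | succ m => simp only [Nat.add_sub_cancel, Nat.cast_succ, pow_succ]; ring

lemma keylem (n : ℕ) (u v PX QX PY QY Wp Wq : ℝ) :
    (∑ k ∈ Finset.range (n+1),
      (aa n k * ((k:ℝ) * u^(k-1) * (u * (PY * (u + v) + 2 * QY * v + QX * v * (Wp + Wq)))) * v^(n-k)
        + aa n k * u^k * ((↑(n-k):ℝ) * v^(n-k-1) * (v * (QY * (v + u) + 2 * PY * u + PX * u * (Wp + Wq))))))
    = ((∑ k ∈ Finset.range n,
        (bb n k * ((↑(k+1):ℝ) * u^k * (u * PX)) * v^(n-k)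
          + bb n k * u^(k+1) * ((↑(n-k):ℝ) * v^(n-k-1) * (v * QX)))) * (Wp + Wq)
        + (∑ k ∈ Finset.range n, bb n k * u^(k+1) * v^(n-k)) * (PY + QY))
      + ((∑ k ∈ Finset.range (n+1), sscoef n k * (u^(k+1) * v^(n-k) * ((↑(k+1):ℝ) * PY + (↑(n-k):ℝ) * QY)))
          + (n:ℝ)/((n:ℝ)+1) * (v^(n+1) * ((↑(n+1):ℝ) * QY))) := by
  have eL : (∑ k ∈ Finset.range (n+1),
      (aa n k * ((k:ℝ) * u^(k-1) * (u * (PY * (u + v) + 2 * QY * v + QX * v * (Wp + Wq)))) * v^(n-k)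
        + aa n k * u^k * ((↑(n-k):ℝ) * v^(n-k-1) * (v * (QY * (v + u) + 2 * PY * u + PX * u * (Wp + Wq))))))
      = ∑ k ∈ Finset.range (n+1),
        (PY * ((k:ℝ) * aa n k * u^(k+1) * v^(n-k))
          + PY * ((k:ℝ) * aa n k * u^k * v^(n-k+1))
          + 2 * PY * ((↑(n-k):ℝ) * aa n k * u^(k+1) * v^(n-k))
          + 2 * QY * ((k:ℝ) * aa n k * u^k * v^(n-k+1))
          + QY * ((↑(n-k):ℝ) * aa n k * u^(k+1) * v^(n-k))
          + QY * ((↑(n-k):ℝ) * aa n k * u^k * v^(n-k+1))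
          + (Wp + Wq) * PX * ((↑(n-k):ℝ) * aa n k * u^(k+1) * v^(n-k))
          + (Wp + Wq) * QX * ((k:ℝ) * aa n k * u^k * v^(n-k+1))) := by
    apply Finset.sum_congr rfl
    intro k hk
    rw [m1', m1']
    ring
  have eR1 : (∑ k ∈ Finset.range n,
        (bb n k * ((↑(k+1):ℝ) * u^k * (u * PX)) * v^(n-k)
          + bb n k * u^(k+1) * ((↑(n-k):ℝ) * v^(n-k-1) * (v * QX))))
      = ∑ k ∈ Finset.range n,
        (PX * ((↑(k+1):ℝ) * bb n k * u^(k+1) * v^(n-k))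
          + QX * ((↑(n-k):ℝ) * bb n k * u^(k+1) * v^(n-k))) := by
    apply Finset.sum_congr rfl
    intro k hk
    rw [m1']
    ring
  have eR2 : (∑ k ∈ Finset.range (n+1),
        sscoef n k * (u^(k+1) * v^(n-k) * ((↑(k+1):ℝ) * PY + (↑(n-k):ℝ) * QY)))
      = ∑ k ∈ Finset.range (n+1),
        (PY * ((↑(k+1):ℝ) * sscoef n k * u^(k+1) * v^(n-k))
          + QY * ((↑(n-k):ℝ) * sscoef n k * u^(k+1) * v^(n-k))) := by
    apply Finset.sum_congr rfl
    intro k hk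
    ring
  have eTail : (n:ℝ)/((n:ℝ)+1) * (v^(n+1) * ((↑(n+1):ℝ) * QY)) = (n:ℝ) * v^(n+1) * QY := by
    have h : ((n:ℝ)+1) ≠ 0 := by positivity
    push_cast
    field_simp
  rw [eL, eR1, eR2, eTail]
  simp only [Finset.sum_add_distrib]
  simp only [← Finset.mul_sum]
  have i1 := Id1 n u v
  have i2 := Id2 n u v
  have i3 := Id3 n u v
  have i4 := Id4 n u v
  linear_combination PY * i3 + QY * i4 + (Wp + Wq) * PX * i1 + (Wp + Wq) * QX * i2


lemma hasDerivAt_fderiv_slice3 {F : ℝ × ℝ × ℝ → ℝ} (hF : ContDiff ℝ (⊤ : ℕ∞) F) (x y t : ℝ) (w : ℝ × ℝ × ℝ) :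
    HasDerivAt (fun s => fderiv ℝ F (x, y, s) w)
      (fderiv ℝ (fderiv ℝ F) (x, y, t) (0, 0, 1) w) t := by
  have hF' : ContDiff ℝ (⊤ : ℕ∞) (fderiv ℝ F) := hF.fderiv_right (by simp)
  have hι : HasDerivAt (fun s : ℝ => ((x, y, s) : ℝ × ℝ × ℝ)) ((0:ℝ), (0:ℝ), (1:ℝ)) t :=
    (hasDerivAt_const t x).prodMk ((hasDerivAt_const t y).prodMk (hasDerivAt_id t))
  have h1 : HasDerivAt (fun s => fderiv ℝ F (x, y, s))
      (fderiv ℝ (fderiv ℝ F) (x, y, t) (0, 0, 1)) t :=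
    ((hF'.differentiable (by simp)) (x, y, t)).hasFDerivAt.comp_hasDerivAt t hι
  simpa using h1.clm_apply (hasDerivAt_const t w)

section package
variable (P : ℝ → ℝ → ℝ → ℝ)

lemma hd_dX_t (hsm : ContDiff ℝ (⊤ : ℕ∞) (fun p : ℝ × ℝ × ℝ => P p.1 p.2.1 p.2.2)) (x y t : ℝ) :
    HasDerivAt (fun s => dX P x y s) (deriv (fun s => dX P x y s) t) t := by
  have hdiff := hsm.differentiable (by simp)
  have hEq : (fun s => dX P x y s)
      = (fun s => fderiv ℝ (fun p : ℝ × ℝ × ℝ => P p.1 p.2.1 p.2.2) (x, y, s) (1, 0, 0)) := by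
    funext s
    exact (hasDerivAt_slice1 (hdiff (x, y, s))).deriv
  rw [hEq]
  exact (hasDerivAt_fderiv_slice3 hsm x y t (1, 0, 0)).differentiableAt.hasDerivAt

lemma hd_dX_x (hsm : ContDiff ℝ (⊤ : ℕ∞) (fun p : ℝ × ℝ × ℝ => P p.1 p.2.1 p.2.2)) (x y t : ℝ) :
    HasDerivAt (fun s => dX P s y t) (deriv (fun s => dX P s y t) x) x := by
  have hdiff := hsm.differentiable (by simp)
  have hEq : (fun s => dX P s y t)
      = (fun s => fderiv ℝ (fun p : ℝ × ℝ × ℝ => P p.1 p.2.1 p.2.2) (s, y, t) (1, 0, 0)) := by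
    funext s
    exact (hasDerivAt_slice1 (hdiff (s, y, t))).deriv
  rw [hEq]
  exact (hasDerivAt_fderiv_slice1 hsm x y t (1, 0, 0)).differentiableAt.hasDerivAt

lemma hd_dX_y (hsm : ContDiff ℝ (⊤ : ℕ∞) (fun p : ℝ × ℝ × ℝ => P p.1 p.2.1 p.2.2)) (x y t : ℝ) :
    HasDerivAt (fun s => dX P x s t) (deriv (fun s => dX P x s t) y) y := by
  have hdiff := hsm.differentiable (by simp)
  have hEq : (fun s => dX P x s t)
      = (fun s => fderiv ℝ (fun p : ℝ × ℝ × ℝ => P p.1 p.2.1 p.2.2) (x, s, t) (1, 0, 0)) := by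
    funext s
    exact (hasDerivAt_slice1 (hdiff (x, s, t))).deriv
  rw [hEq]
  exact (hasDerivAt_fderiv_slice2 hsm x y t (1, 0, 0)).differentiableAt.hasDerivAt

lemma hd_dY_x (hsm : ContDiff ℝ (⊤ : ℕ∞) (fun p : ℝ × ℝ × ℝ => P p.1 p.2.1 p.2.2)) (x y t : ℝ) :
    HasDerivAt (fun s => dY P s y t) (deriv (fun s => dX P x s t) y) x := by
  have hdiff := hsm.differentiable (by simp)
  have hEqY : (fun s => dY P s y t)
      = (fun s => fderiv ℝ (fun p : ℝ × ℝ × ℝ => P p.1 p.2.1 p.2.2) (s, y, t) (0, 1, 0)) := by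
    funext s
    exact (hasDerivAt_slice2 (hdiff (s, y, t))).deriv
  have h2 : deriv (fun s => dX P x s t) y
      = fderiv ℝ (fderiv ℝ (fun p : ℝ × ℝ × ℝ => P p.1 p.2.1 p.2.2)) (x, y, t) (0, 1, 0) (1, 0, 0) := by
    have hEqX : (fun s => dX P x s t)
        = (fun s => fderiv ℝ (fun p : ℝ × ℝ × ℝ => P p.1 p.2.1 p.2.2) (x, s, t) (1, 0, 0)) := by
      funext s
      exact (hasDerivAt_slice1 (hdiff (x, s, t))).deriv
    rw [hEqX]
    exact (hasDerivAt_fderiv_slice2 hsm x y t (1, 0, 0)).deriv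
  rw [hEqY, h2, ← symm_second hsm (x, y, t) (1, 0, 0) (0, 1, 0)]
  exact hasDerivAt_fderiv_slice1 hsm x y t (0, 1, 0)

end package

noncomputable def Gfun (n : ℕ) (u v : ℝ) : ℝ :=
  ∑ k ∈ Finset.range n, bb n k * u^(k+1) * v^(n-k)

noncomputable def Sfun (n : ℕ) (p q : ℝ) : ℝ :=
  (∑ k ∈ Finset.range (n+1), sscoef n k * Real.exp (((k+1 : ℕ) : ℝ) * p + ((n-k : ℕ) : ℝ) * q))
    + (n:ℝ)/((n:ℝ)+1) * Real.exp (((n+1 : ℕ) : ℝ) * q)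

theorem toda_negative_flow_conservation_laws
    (P Q : ℝ → ℝ → ℝ → ℝ)
    (hPsmooth : ContDiff ℝ (⊤ : ℕ∞) (fun p : ℝ × ℝ × ℝ => P p.1 p.2.1 p.2.2))
    (hQsmooth : ContDiff ℝ (⊤ : ℕ∞) (fun p : ℝ × ℝ × ℝ => Q p.1 p.2.1 p.2.2))
    (hP : ∀ x y t : ℝ,
      deriv (fun s => dX P x y s) t =
        deriv (fun s => dX P x s t) y * (Real.exp (dX P x y t) + Real.exp (dX Q x y t))
        + 2 * deriv (fun s => dX Q x s t) y * Real.exp (dX Q x y t)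
        + deriv (fun s => dX Q s y t) x * Real.exp (dX Q x y t) * (dY P x y t + dY Q x y t))
    (hQ : ∀ x y t : ℝ,
      deriv (fun s => dX Q x y s) t =
        deriv (fun s => dX Q x s t) y * (Real.exp (dX Q x y t) + Real.exp (dX P x y t))
        + 2 * deriv (fun s => dX P x s t) y * Real.exp (dX P x y t)
        + deriv (fun s => dX P s y t) x * Real.exp (dX P x y t) * (dY P x y t + dY Q x y t))
    (n : ℕ) (hn : 1 ≤ n) :
    ∃ G S : ℝ → ℝ → ℝ,
      ContDiff ℝ (⊤ : ℕ∞) (fun p : ℝ × ℝ => G p.1 p.2) ∧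
      ContDiff ℝ (⊤ : ℕ∞) (fun p : ℝ × ℝ => S p.1 p.2) ∧
      ∀ x y t : ℝ,
        deriv (fun s => Ttoda n (Real.exp (dX P x y s)) (Real.exp (dX Q x y s))) t =
          deriv (fun s =>
            G (Real.exp (dX P s y t)) (Real.exp (dX Q s y t)) * (dY P s y t + dY Q s y t)) x
          + deriv (fun s => S (dX P x s t) (dX Q x s t)) y := by
  refine ⟨Gfun n, Sfun n, ?_, ?_, ?_⟩
  · simp only [Gfun]
    apply ContDiff.sum
    intro i _
    fun_prop
  · simp only [Sfun]
    apply ContDiff.add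
    · apply ContDiff.sum
      intro i _
      fun_prop
    · fun_prop
  · intro x y t
    have hdPt := hd_dX_t P hPsmooth x y t
    have hdQt := hd_dX_t Q hQsmooth x y t
    have hdPx := hd_dX_x P hPsmooth x y t
    have hdQx := hd_dX_x Q hQsmooth x y t
    have hdPy := hd_dX_y P hPsmooth x y t
    have hdQy := hd_dX_y Q hQsmooth x y t
    have hdYPx := hd_dY_x P hPsmooth x y t
    have hdYQx := hd_dY_x Q hQsmooth x y t
    have hu := hdPt.exp
    have hv := hdQt.exp
    have hT : HasDerivAt (fun s => Ttoda n (Real.exp (dX P x y s)) (Real.exp (dX Q x y s)))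
        (∑ k ∈ Finset.range (n+1),
          (aa n k * ((k:ℝ) * Real.exp (dX P x y t)^(k-1)
              * (Real.exp (dX P x y t) * deriv (fun s => dX P x y s) t)) * Real.exp (dX Q x y t)^(n-k)
            + aa n k * Real.exp (dX P x y t)^k * ((↑(n-k):ℝ) * Real.exp (dX Q x y t)^(n-k-1)
              * (Real.exp (dX Q x y t) * deriv (fun s => dX Q x y s) t)))) t :=
      HasDerivAt.fun_sum (fun k _ => ((hu.fun_pow k).const_mul (aa n k)).fun_mul (hv.fun_pow (n-k)))
    have hUx := hdPx.exp
    have hVx := hdQx.exp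
    have hGc : HasDerivAt (fun s => Gfun n (Real.exp (dX P s y t)) (Real.exp (dX Q s y t)))
        (∑ k ∈ Finset.range n,
          (bb n k * ((↑(k+1):ℝ) * Real.exp (dX P x y t)^k
              * (Real.exp (dX P x y t) * deriv (fun s => dX P s y t) x)) * Real.exp (dX Q x y t)^(n-k)
            + bb n k * Real.exp (dX P x y t)^(k+1) * ((↑(n-k):ℝ) * Real.exp (dX Q x y t)^(n-k-1)
              * (Real.exp (dX Q x y t) * deriv (fun s => dX Q s y t) x)))) x :=
      HasDerivAt.fun_sum (fun k _ => ((hUx.fun_pow (k+1)).const_mul (bb n k)).fun_mul (hVx.fun_pow (n-k)))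
    have hW : HasDerivAt (fun s => dY P s y t + dY Q s y t)
        (deriv (fun s => dX P x s t) y + deriv (fun s => dX Q x s t) y) x := hdYPx.add hdYQx
    have hR1 : HasDerivAt
        (fun s => Gfun n (Real.exp (dX P s y t)) (Real.exp (dX Q s y t)) * (dY P s y t + dY Q s y t))
        ((∑ k ∈ Finset.range n,
          (bb n k * ((↑(k+1):ℝ) * Real.exp (dX P x y t)^k
              * (Real.exp (dX P x y t) * deriv (fun s => dX P s y t) x)) * Real.exp (dX Q x y t)^(n-k)
            + bb n k * Real.exp (dX P x y t)^(k+1) * ((↑(n-k):ℝ) * Real.exp (dX Q x y t)^(n-k-1)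
              * (Real.exp (dX Q x y t) * deriv (fun s => dX Q s y t) x)))) * (dY P x y t + dY Q x y t)
          + Gfun n (Real.exp (dX P x y t)) (Real.exp (dX Q x y t))
            * (deriv (fun s => dX P x s t) y + deriv (fun s => dX Q x s t) y)) x := hGc.mul hW
    have hS : HasDerivAt (fun s => Sfun n (dX P x s t) (dX Q x s t))
        ((∑ k ∈ Finset.range (n+1), sscoef n k
            * (Real.exp (((k+1 : ℕ) : ℝ) * dX P x y t + ((n-k : ℕ) : ℝ) * dX Q x y t)
              * (((k+1 : ℕ) : ℝ) * deriv (fun s => dX P x s t) y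
                + ((n-k : ℕ) : ℝ) * deriv (fun s => dX Q x s t) y)))
          + (n:ℝ)/((n:ℝ)+1) * (Real.exp (((n+1 : ℕ) : ℝ) * dX Q x y t)
              * (((n+1 : ℕ) : ℝ) * deriv (fun s => dX Q x s t) y))) y :=
      HasDerivAt.add
        (HasDerivAt.fun_sum (fun k _ =>
          (((hdPy.const_mul (((k+1 : ℕ) : ℝ))).fun_add (hdQy.const_mul (((n-k : ℕ) : ℝ)))).exp.const_mul
            (sscoef n k))))
        (((hdQy.const_mul (((n+1 : ℕ) : ℝ))).exp.const_mul ((n:ℝ)/((n:ℝ)+1))))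
    rw [hT.deriv, hR1.deriv, hS.deriv, hP x y t, hQ x y t]
    simp only [Real.exp_add, Real.exp_nat_mul, Gfun]
    linear_combination keylem n (Real.exp (dX P x y t)) (Real.exp (dX Q x y t))
      (deriv (fun s => dX P s y t) x) (deriv (fun s => dX Q s y t) x)
      (deriv (fun s => dX P x s t) y) (deriv (fun s => dX Q x s t) y)
      (dY P x y t) (dY Q x y t)
end

section
/- Let P, Q : ℝ³ → ℝ be smooth functions of the variables (x, y, t) satisfying the system P_{xt} = P_x·P_{xy} + Q_x·P_{xy} + 2P_x·Q_{xy} + P_{xx}·P_y + P_{xx}·Q_y and Q_{xt} = Q_x·Q_{xy} + P_x·Q_{xy} + 2Q_x·P_{xy} + Q_{xx}·Q_y + Q_{xx}·P_y. Then the conservation law ∂_t (P_x·Q_x) = ∂_x (P_x·Q_x·(P_y + Q_y)) + ∂_y (P_x·Q_x·(P_x + Q_x)) holds identically. -/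
open Real Finset

section SWHelpers

lemma sw_sliceX_hasDerivAt (G : ℝ × ℝ × ℝ → ℝ) (hG : Differentiable ℝ G) (x y t : ℝ) :
    HasDerivAt (fun s => G (s, y, t)) (fderiv ℝ G (x, y, t) (1, 0, 0)) x := by
  have h1 : HasDerivAt (fun s : ℝ => ((s : ℝ), y, t)) ((1 : ℝ), (0 : ℝ), (0 : ℝ)) x :=
    (hasDerivAt_id x).prodMk ((hasDerivAt_const x y).prodMk (hasDerivAt_const x t))
  exact (hG (x, y, t)).hasFDerivAt.comp_hasDerivAt x h1

lemma sw_sliceY_hasDerivAt (G : ℝ × ℝ × ℝ → ℝ) (hG : Differentiable ℝ G) (x y t : ℝ) :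
    HasDerivAt (fun s => G (x, s, t)) (fderiv ℝ G (x, y, t) (0, 1, 0)) y := by
  have h1 : HasDerivAt (fun s : ℝ => (x, (s : ℝ), t)) ((0 : ℝ), (1 : ℝ), (0 : ℝ)) y :=
    (hasDerivAt_const y x).prodMk ((hasDerivAt_id y).prodMk (hasDerivAt_const y t))
  exact (hG (x, y, t)).hasFDerivAt.comp_hasDerivAt y h1

lemma sw_sliceT_hasDerivAt (G : ℝ × ℝ × ℝ → ℝ) (hG : Differentiable ℝ G) (x y t : ℝ) :
    HasDerivAt (fun s => G (x, y, s)) (fderiv ℝ G (x, y, t) (0, 0, 1)) t := by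
  have h1 : HasDerivAt (fun s : ℝ => (x, y, (s : ℝ))) ((0 : ℝ), (0 : ℝ), (1 : ℝ)) t :=
    (hasDerivAt_const t x).prodMk ((hasDerivAt_const t y).prodMk (hasDerivAt_id t))
  exact (hG (x, y, t)).hasFDerivAt.comp_hasDerivAt t h1

lemma sw_pd_smooth (G : ℝ × ℝ × ℝ → ℝ) (hG : ContDiff ℝ (⊤ : ℕ∞) G) (v : ℝ × ℝ × ℝ) :
    ContDiff ℝ (⊤ : ℕ∞) (fun p => fderiv ℝ G p v) :=
  (hG.fderiv_right (by simp)).clm_apply contDiff_const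

lemma sw_mixed_symm (G : ℝ × ℝ × ℝ → ℝ) (hG : ContDiff ℝ (⊤ : ℕ∞) G) (p v w : ℝ × ℝ × ℝ) :
    fderiv ℝ (fun q => fderiv ℝ G q v) p w = fderiv ℝ (fun q => fderiv ℝ G q w) p v := by
  have hD : HasFDerivAt (fderiv ℝ G) (fderiv ℝ (fderiv ℝ G) p) p :=
    (((hG.fderiv_right (m := 1) (by exact WithTop.coe_le_coe.mpr le_top)).differentiable one_ne_zero) p).hasFDerivAt
  have key : ∀ u : ℝ × ℝ × ℝ, fderiv ℝ (fun q => fderiv ℝ G q u) p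
      = (fderiv ℝ (fderiv ℝ G) p).flip u := by
    intro u
    have h2 : HasFDerivAt (fun q => fderiv ℝ G q u) ((fderiv ℝ (fderiv ℝ G) p).flip u) p :=
      hD.clm_apply (hasFDerivAt_const u p) |>.congr_fderiv
        (by refine ContinuousLinearMap.ext fun z => ?_; simp)
    exact h2.fderiv
  rw [key v, key w]
  simp only [ContinuousLinearMap.flip_apply]
  exact second_derivative_symmetric (fun q => ((hG.differentiable (by simp)) q).hasFDerivAt) hD w v

end SWHelpers

theorem shallow_water_first_conservation_law
    (P Q : ℝ → ℝ → ℝ → ℝ)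
    (hPsmooth : ContDiff ℝ (⊤ : ℕ∞) (fun p : ℝ × ℝ × ℝ => P p.1 p.2.1 p.2.2))
    (hQsmooth : ContDiff ℝ (⊤ : ℕ∞) (fun p : ℝ × ℝ × ℝ => Q p.1 p.2.1 p.2.2))
    (hP : ∀ x y t : ℝ,
      deriv (fun s => dX P x y s) t =
        dX P x y t * deriv (fun s => dX P x s t) y
        + dX Q x y t * deriv (fun s => dX P x s t) y
        + 2 * dX P x y t * deriv (fun s => dX Q x s t) y
        + deriv (fun s => dX P s y t) x * dY P x y t
        + deriv (fun s => dX P s y t) x * dY Q x y t)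
    (hQ : ∀ x y t : ℝ,
      deriv (fun s => dX Q x y s) t =
        dX Q x y t * deriv (fun s => dX Q x s t) y
        + dX P x y t * deriv (fun s => dX Q x s t) y
        + 2 * dX Q x y t * deriv (fun s => dX P x s t) y
        + deriv (fun s => dX Q s y t) x * dY Q x y t
        + deriv (fun s => dX Q s y t) x * dY P x y t)
    (x y t : ℝ) :
    deriv (fun s => dX P x y s * dX Q x y s) t =
      deriv (fun s => dX P s y t * dX Q s y t * (dY P s y t + dY Q s y t)) x
      + deriv (fun s => dX P x s t * dX Q x s t * (dX P x s t + dX Q x s t)) y := by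
  set FP : ℝ × ℝ × ℝ → ℝ := fun p => P p.1 p.2.1 p.2.2 with hFP
  set FQ : ℝ × ℝ × ℝ → ℝ := fun p => Q p.1 p.2.1 p.2.2 with hFQ
  have hFPd : Differentiable ℝ FP := hPsmooth.differentiable (by simp)
  have hFQd : Differentiable ℝ FQ := hQsmooth.differentiable (by simp)
  set gP : ℝ × ℝ × ℝ → ℝ := fun p => fderiv ℝ FP p (1, 0, 0) with hgP
  set gQ : ℝ × ℝ × ℝ → ℝ := fun p => fderiv ℝ FQ p (1, 0, 0) with hgQ
  set hP' : ℝ × ℝ × ℝ → ℝ := fun p => fderiv ℝ FP p (0, 1, 0) with hhP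
  set hQ' : ℝ × ℝ × ℝ → ℝ := fun p => fderiv ℝ FQ p (0, 1, 0) with hhQ
  have hgPd : Differentiable ℝ gP := (sw_pd_smooth FP hPsmooth _).differentiable (by simp)
  have hgQd : Differentiable ℝ gQ := (sw_pd_smooth FQ hQsmooth _).differentiable (by simp)
  have hhPd : Differentiable ℝ hP' := (sw_pd_smooth FP hPsmooth _).differentiable (by simp)
  have hhQd : Differentiable ℝ hQ' := (sw_pd_smooth FQ hQsmooth _).differentiable (by simp)
  -- identify dX, dY with the fderiv-based partials
  have dXP_eq : ∀ a b c : ℝ, dX P a b c = gP (a, b, c) := fun a b c =>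
    (sw_sliceX_hasDerivAt FP hFPd a b c).deriv
  have dXQ_eq : ∀ a b c : ℝ, dX Q a b c = gQ (a, b, c) := fun a b c =>
    (sw_sliceX_hasDerivAt FQ hFQd a b c).deriv
  have dYP_eq : ∀ a b c : ℝ, dY P a b c = hP' (a, b, c) := fun a b c =>
    (sw_sliceY_hasDerivAt FP hFPd a b c).deriv
  have dYQ_eq : ∀ a b c : ℝ, dY Q a b c = hQ' (a, b, c) := fun a b c =>
    (sw_sliceY_hasDerivAt FQ hFQd a b c).deriv
  -- HasDerivAt facts for all the slice functions appearing in the goal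
  have HXP : HasDerivAt (fun s => dX P s y t) (deriv (fun s => dX P s y t) x) x := by
    have h := sw_sliceX_hasDerivAt gP hgPd x y t
    have he : (fun s => dX P s y t) = fun s => gP (s, y, t) := funext fun s => dXP_eq s y t
    rw [← he] at h; exact h.differentiableAt.hasDerivAt
  have HXQ : HasDerivAt (fun s => dX Q s y t) (deriv (fun s => dX Q s y t) x) x := by
    have h := sw_sliceX_hasDerivAt gQ hgQd x y t
    have he : (fun s => dX Q s y t) = fun s => gQ (s, y, t) := funext fun s => dXQ_eq s y t
    rw [← he] at h; exact h.differentiableAt.hasDerivAt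
  have HXYP : HasDerivAt (fun s => dY P s y t) (deriv (fun s => dY P s y t) x) x := by
    have h := sw_sliceX_hasDerivAt hP' hhPd x y t
    have he : (fun s => dY P s y t) = fun s => hP' (s, y, t) := funext fun s => dYP_eq s y t
    rw [← he] at h; exact h.differentiableAt.hasDerivAt
  have HXYQ : HasDerivAt (fun s => dY Q s y t) (deriv (fun s => dY Q s y t) x) x := by
    have h := sw_sliceX_hasDerivAt hQ' hhQd x y t
    have he : (fun s => dY Q s y t) = fun s => hQ' (s, y, t) := funext fun s => dYQ_eq s y t
    rw [← he] at h; exact h.differentiableAt.hasDerivAt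
  have HYP : HasDerivAt (fun s => dX P x s t) (deriv (fun s => dX P x s t) y) y := by
    have h := sw_sliceY_hasDerivAt gP hgPd x y t
    have he : (fun s => dX P x s t) = fun s => gP (x, s, t) := funext fun s => dXP_eq x s t
    rw [← he] at h; exact h.differentiableAt.hasDerivAt
  have HYQ : HasDerivAt (fun s => dX Q x s t) (deriv (fun s => dX Q x s t) y) y := by
    have h := sw_sliceY_hasDerivAt gQ hgQd x y t
    have he : (fun s => dX Q x s t) = fun s => gQ (x, s, t) := funext fun s => dXQ_eq x s t
    rw [← he] at h; exact h.differentiableAt.hasDerivAt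
  have HTP : HasDerivAt (fun s => dX P x y s) (deriv (fun s => dX P x y s) t) t := by
    have h := sw_sliceT_hasDerivAt gP hgPd x y t
    have he : (fun s => dX P x y s) = fun s => gP (x, y, s) := funext fun s => dXP_eq x y s
    rw [← he] at h; exact h.differentiableAt.hasDerivAt
  have HTQ : HasDerivAt (fun s => dX Q x y s) (deriv (fun s => dX Q x y s) t) t := by
    have h := sw_sliceT_hasDerivAt gQ hgQd x y t
    have he : (fun s => dX Q x y s) = fun s => gQ (x, y, s) := funext fun s => dXQ_eq x y s
    rw [← he] at h; exact h.differentiableAt.hasDerivAt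
  -- mixed partials symmetry
  have mixP : deriv (fun s => dY P s y t) x = deriv (fun s => dX P x s t) y := by
    have h1 := sw_sliceX_hasDerivAt hP' hhPd x y t
    have he : (fun s => dY P s y t) = fun s => hP' (s, y, t) := funext fun s => dYP_eq s y t
    have h2 := sw_sliceY_hasDerivAt gP hgPd x y t
    have he2 : (fun s => dX P x s t) = fun s => gP (x, s, t) := funext fun s => dXP_eq x s t
    rw [← he] at h1; rw [← he2] at h2
    rw [h1.deriv, h2.deriv, hhP, hgP]
    exact sw_mixed_symm FP hPsmooth (x, y, t) (0, 1, 0) (1, 0, 0)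
  have mixQ : deriv (fun s => dY Q s y t) x = deriv (fun s => dX Q x s t) y := by
    have h1 := sw_sliceX_hasDerivAt hQ' hhQd x y t
    have he : (fun s => dY Q s y t) = fun s => hQ' (s, y, t) := funext fun s => dYQ_eq s y t
    have h2 := sw_sliceY_hasDerivAt gQ hgQd x y t
    have he2 : (fun s => dX Q x s t) = fun s => gQ (x, s, t) := funext fun s => dXQ_eq x s t
    rw [← he] at h1; rw [← he2] at h2
    rw [h1.deriv, h2.deriv, hhQ, hgQ]
    exact sw_mixed_symm FQ hQsmooth (x, y, t) (0, 1, 0) (1, 0, 0)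
  -- expand the three derivatives in the goal
  have EL := ((HTP.mul HTQ)).deriv
  have ER1 := (((HXP.mul HXQ)).mul ((HXYP.add HXYQ))).deriv
  have ER2 := (((HYP.mul HYQ)).mul ((HYP.add HYQ))).deriv
  simp only [Pi.mul_def, Pi.add_def] at EL ER1 ER2
  rw [EL, ER1, ER2, hP x y t, hQ x y t, mixP, mixQ]
  ring
end

section
/- Let P, Q : ℝ³ → ℝ be smooth functions of the variables (x, y, t) satisfying the system P_{xt} = P_x·P_{xy} + Q_x·P_{xy} + 2P_x·Q_{xy} + P_{xx}·P_y + P_{xx}·Q_y and Q_{xt} = Q_x·Q_{xy} + P_x·Q_{xy} + 2Q_x·P_{xy} + Q_{xx}·Q_y + Q_{xx}·P_y. Then the conservation law ∂_t (2P_x·Q_x² + 2P_x²·Q_x) = ∂_x ((P_y + Q_y)·(2P_x·Q_x² + 2P_x²·Q_x)) + ∂_y (2P_x³·Q_x + 6P_x²·Q_x² + 2P_x·Q_x³) holds identically. -/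
open Real Finset

private lemma hd1 {H : ℝ × ℝ × ℝ → ℝ} (hH : Differentiable ℝ H) (x y t : ℝ) :
    HasDerivAt (fun s => H (s, y, t)) (fderiv ℝ H (x, y, t) (1, 0, 0)) x := by
  have hc : HasDerivAt (fun s : ℝ => ((s, y, t) : ℝ × ℝ × ℝ)) ((1 : ℝ), ((0 : ℝ), (0 : ℝ))) x :=
    (hasDerivAt_id x).prodMk (hasDerivAt_const x (y, t))
  exact (hH (x, y, t)).hasFDerivAt.comp_hasDerivAt x hc

private lemma hd2 {H : ℝ × ℝ × ℝ → ℝ} (hH : Differentiable ℝ H) (x y t : ℝ) :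
    HasDerivAt (fun s => H (x, s, t)) (fderiv ℝ H (x, y, t) (0, 1, 0)) y := by
  have hc : HasDerivAt (fun s : ℝ => ((x, s, t) : ℝ × ℝ × ℝ)) ((0 : ℝ), ((1 : ℝ), (0 : ℝ))) y :=
    (hasDerivAt_const y x).prodMk ((hasDerivAt_id y).prodMk (hasDerivAt_const y t))
  exact (hH (x, y, t)).hasFDerivAt.comp_hasDerivAt y hc

private lemma hd3 {H : ℝ × ℝ × ℝ → ℝ} (hH : Differentiable ℝ H) (x y t : ℝ) :
    HasDerivAt (fun s => H (x, y, s)) (fderiv ℝ H (x, y, t) (0, 0, 1)) t := by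
  have hc : HasDerivAt (fun s : ℝ => ((x, y, s) : ℝ × ℝ × ℝ)) ((0 : ℝ), ((0 : ℝ), (1 : ℝ))) t :=
    (hasDerivAt_const t x).prodMk ((hasDerivAt_const t y).prodMk (hasDerivAt_id t))
  exact (hH (x, y, t)).hasFDerivAt.comp_hasDerivAt t hc

private lemma smooth_dir {F : ℝ × ℝ × ℝ → ℝ} (hF : ContDiff ℝ (⊤ : ℕ∞) F) (w : ℝ × ℝ × ℝ) :
    ContDiff ℝ (⊤ : ℕ∞) (fun p => fderiv ℝ F p w) :=
  (hF.fderiv_right (by simp)).clm_apply contDiff_const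

private lemma fderiv_dir {F : ℝ × ℝ × ℝ → ℝ} (hF : ContDiff ℝ (⊤ : ℕ∞) F) (q v w : ℝ × ℝ × ℝ) :
    fderiv ℝ (fun p => fderiv ℝ F p w) q v = fderiv ℝ (fderiv ℝ F) q v w := by
  have h1 : HasFDerivAt (fderiv ℝ F) (fderiv ℝ (fderiv ℝ F) q) q :=
    (((hF.fderiv_right (m := (⊤ : ℕ∞)) (by simp)).differentiable (by simp)) q).hasFDerivAt
  have h2 : HasFDerivAt (fun p => fderiv ℝ F p w)
      ((ContinuousLinearMap.apply ℝ ℝ w).comp (fderiv ℝ (fderiv ℝ F) q)) q :=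
    (ContinuousLinearMap.apply ℝ ℝ w).hasFDerivAt.comp q h1
  rw [h2.fderiv]; rfl

private lemma snd_symm {F : ℝ × ℝ × ℝ → ℝ} (hF : ContDiff ℝ (⊤ : ℕ∞) F) (q v w : ℝ × ℝ × ℝ) :
    fderiv ℝ (fderiv ℝ F) q v w = fderiv ℝ (fderiv ℝ F) q w v := by
  have h1 : HasFDerivAt (fderiv ℝ F) (fderiv ℝ (fderiv ℝ F) q) q :=
    (((hF.fderiv_right (m := (⊤ : ℕ∞)) (by simp)).differentiable (by simp)) q).hasFDerivAt
  exact second_derivative_symmetric (fun p => ((hF.differentiable (by simp)) p).hasFDerivAt) h1 v w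

theorem shallow_water_second_conservation_law
    (P Q : ℝ → ℝ → ℝ → ℝ)
    (hPsmooth : ContDiff ℝ (⊤ : ℕ∞) (fun p : ℝ × ℝ × ℝ => P p.1 p.2.1 p.2.2))
    (hQsmooth : ContDiff ℝ (⊤ : ℕ∞) (fun p : ℝ × ℝ × ℝ => Q p.1 p.2.1 p.2.2))
    (hP : ∀ x y t : ℝ,
      deriv (fun s => dX P x y s) t =
        dX P x y t * deriv (fun s => dX P x s t) y
        + dX Q x y t * deriv (fun s => dX P x s t) y
        + 2 * dX P x y t * deriv (fun s => dX Q x s t) y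
        + deriv (fun s => dX P s y t) x * dY P x y t
        + deriv (fun s => dX P s y t) x * dY Q x y t)
    (hQ : ∀ x y t : ℝ,
      deriv (fun s => dX Q x y s) t =
        dX Q x y t * deriv (fun s => dX Q x s t) y
        + dX P x y t * deriv (fun s => dX Q x s t) y
        + 2 * dX Q x y t * deriv (fun s => dX P x s t) y
        + deriv (fun s => dX Q s y t) x * dY Q x y t
        + deriv (fun s => dX Q s y t) x * dY P x y t)
    (x y t : ℝ) :
    deriv (fun s => 2 * dX P x y s * dX Q x y s ^ 2 + 2 * dX P x y s ^ 2 * dX Q x y s) t =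
      deriv (fun s => (dY P s y t + dY Q s y t) * (2 * dX P s y t * dX Q s y t ^ 2 + 2 * dX P s y t ^ 2 * dX Q s y t)) x
      + deriv (fun s => 2 * dX P x s t ^ 3 * dX Q x s t + 6 * dX P x s t ^ 2 * dX Q x s t ^ 2 + 2 * dX P x s t * dX Q x s t ^ 3) y := by
  set F : ℝ × ℝ × ℝ → ℝ := fun p => P p.1 p.2.1 p.2.2 with hFdef
  set G : ℝ × ℝ × ℝ → ℝ := fun p => Q p.1 p.2.1 p.2.2 with hGdef
  have hFd : Differentiable ℝ F := hPsmooth.differentiable (by simp)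
  have hGd : Differentiable ℝ G := hQsmooth.differentiable (by simp)
  set u : ℝ × ℝ × ℝ → ℝ := fun p => fderiv ℝ F p (1, 0, 0) with hudef
  set v : ℝ × ℝ × ℝ → ℝ := fun p => fderiv ℝ G p (1, 0, 0) with hvdef
  set wP : ℝ × ℝ × ℝ → ℝ := fun p => fderiv ℝ F p (0, 1, 0) with hwPdef
  set wQ : ℝ × ℝ × ℝ → ℝ := fun p => fderiv ℝ G p (0, 1, 0) with hwQdef
  have hus : ContDiff ℝ (⊤ : ℕ∞) u := smooth_dir hPsmooth _
  have hvs : ContDiff ℝ (⊤ : ℕ∞) v := smooth_dir hQsmooth _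
  have hwPs : ContDiff ℝ (⊤ : ℕ∞) wP := smooth_dir hPsmooth _
  have hwQs : ContDiff ℝ (⊤ : ℕ∞) wQ := smooth_dir hQsmooth _
  have hud : Differentiable ℝ u := hus.differentiable (by simp)
  have hvd : Differentiable ℝ v := hvs.differentiable (by simp)
  have hwPd : Differentiable ℝ wP := hwPs.differentiable (by simp)
  have hwQd : Differentiable ℝ wQ := hwQs.differentiable (by simp)
  have hu_eq : ∀ a b c : ℝ, dX P a b c = u (a, b, c) := fun a b c => (hd1 hFd a b c).deriv
  have hv_eq : ∀ a b c : ℝ, dX Q a b c = v (a, b, c) := fun a b c => (hd1 hGd a b c).deriv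
  have hwP_eq : ∀ a b c : ℝ, dY P a b c = wP (a, b, c) := fun a b c => (hd2 hFd a b c).deriv
  have hwQ_eq : ∀ a b c : ℝ, dY Q a b c = wQ (a, b, c) := fun a b c => (hd2 hGd a b c).deriv
  -- abbreviations for second derivatives at q
  set q : ℝ × ℝ × ℝ := (x, y, t) with hqdef
  -- x-derivatives of wP, wQ equal y-derivatives of u, v (Schwarz)
  have hwPx : fderiv ℝ wP q (1, 0, 0) = fderiv ℝ u q (0, 1, 0) := by
    rw [hwPdef, hudef, fderiv_dir hPsmooth, fderiv_dir hPsmooth, snd_symm hPsmooth]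
  have hwQx : fderiv ℝ wQ q (1, 0, 0) = fderiv ℝ v q (0, 1, 0) := by
    rw [hwQdef, hvdef, fderiv_dir hQsmooth, fderiv_dir hQsmooth, snd_symm hQsmooth]
  -- rewrite the goal and hypotheses in terms of u, v, wP, wQ
  simp only [hu_eq, hv_eq, hwP_eq, hwQ_eq] at hP hQ ⊢
  -- names for values
  set a := u q with ha
  set b := v q with hb
  set pY := wP q with hpY
  set qY := wQ q with hqY
  set pxx := fderiv ℝ u q (1, 0, 0) with hpxx
  set pxy := fderiv ℝ u q (0, 1, 0) with hpxy
  set pxt := fderiv ℝ u q (0, 0, 1) with hpxt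
  set qxx := fderiv ℝ v q (1, 0, 0) with hqxx
  set qxy := fderiv ℝ v q (0, 1, 0) with hqxy
  set qxt := fderiv ℝ v q (0, 0, 1) with hqxt
  have hP' : pxt = a * pxy + b * pxy + 2 * a * qxy + pxx * pY + pxx * qY := by
    have := hP x y t
    rwa [(hd3 hud x y t).deriv, (hd2 hud x y t).deriv, (hd2 hvd x y t).deriv,
      (hd1 hud x y t).deriv] at this
  have hQ' : qxt = b * qxy + a * qxy + 2 * b * pxy + qxx * qY + qxx * pY := by
    have := hQ x y t
    rwa [(hd3 hvd x y t).deriv, (hd2 hvd x y t).deriv, (hd2 hud x y t).deriv,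
      (hd1 hvd x y t).deriv] at this
  -- compute the three derivatives in the goal
  have hA3 := hd3 hud x y t
  have hB3 := hd3 hvd x y t
  have hL : deriv (fun s => 2 * u (x, y, s) * v (x, y, s) ^ 2 + 2 * u (x, y, s) ^ 2 * v (x, y, s)) t
      = 2 * pxt * b ^ 2 + 2 * a * (2 * b * qxt) + (2 * (2 * a * pxt) * b + 2 * a ^ 2 * qxt) := by
    have h := (((hA3.const_mul 2).mul (hB3.pow 2)).add (((hA3.pow 2).const_mul 2).mul hB3)).deriv
    erw [h]; simp only [Pi.pow_apply, Pi.add_apply]; ring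
  have hA1 := hd1 hud x y t
  have hB1 := hd1 hvd x y t
  have hwP1 := hd1 hwPd x y t
  have hwQ1 := hd1 hwQd x y t
  have hX : deriv (fun s => (wP (s, y, t) + wQ (s, y, t)) *
      (2 * u (s, y, t) * v (s, y, t) ^ 2 + 2 * u (s, y, t) ^ 2 * v (s, y, t))) x
      = (pxy + qxy) * (2 * a * b ^ 2 + 2 * a ^ 2 * b)
        + (pY + qY) * (2 * pxx * b ^ 2 + 2 * a * (2 * b * qxx) + (2 * (2 * a * pxx) * b + 2 * a ^ 2 * qxx)) := by
    have h := ((hwP1.add hwQ1).mul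
      (((hA1.const_mul 2).mul (hB1.pow 2)).add (((hA1.pow 2).const_mul 2).mul hB1))).deriv
    erw [h]; rw [hwPx, hwQx]; simp only [Pi.pow_apply, Pi.add_apply, Pi.mul_apply]; ring
  have hA2 := hd2 hud x y t
  have hB2 := hd2 hvd x y t
  have hY : deriv (fun s => 2 * u (x, s, t) ^ 3 * v (x, s, t) + 6 * u (x, s, t) ^ 2 * v (x, s, t) ^ 2
      + 2 * u (x, s, t) * v (x, s, t) ^ 3) y
      = 2 * (3 * a ^ 2 * pxy) * b + 2 * a ^ 3 * qxy
        + (6 * (2 * a * pxy) * b ^ 2 + 6 * a ^ 2 * (2 * b * qxy))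
        + (2 * pxy * b ^ 3 + 2 * a * (3 * b ^ 2 * qxy)) := by
    have h := ((((hA2.pow 3).const_mul 2).mul hB2).add
      ((((hA2.pow 2).const_mul 6).mul (hB2.pow 2)).add
        ((hA2.const_mul 2).mul (hB2.pow 3)))).deriv
    rw [show (fun s => 2 * u (x, s, t) ^ 3 * v (x, s, t) + 6 * u (x, s, t) ^ 2 * v (x, s, t) ^ 2
      + 2 * u (x, s, t) * v (x, s, t) ^ 3)
      = fun s => 2 * u (x, s, t) ^ 3 * v (x, s, t) + (6 * u (x, s, t) ^ 2 * v (x, s, t) ^ 2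
      + 2 * u (x, s, t) * v (x, s, t) ^ 3) from by funext s; ring]
    erw [h]; simp only [Pi.pow_apply, Pi.add_apply]
    ring
  rw [hL, hX, hY, hP', hQ']
  ring
end

section
/- Let P, Q : ℝ³ → ℝ be smooth functions of the variables (x, y, t) satisfying the system P_{xt} = P_{xy}·(e^{P_x} + e^{Q_x}) + 2·Q_{xy}·e^{Q_x} + Q_{xx}·e^{Q_x}·(P_y + Q_y) and Q_{xt} = Q_{xy}·(e^{Q_x} + e^{P_x}) + 2·P_{xy}·e^{P_x} + P_{xx}·e^{P_x}·(P_y + Q_y). Then the conservation law ∂_t (e^{P_x} + e^{Q_x}) = ∂_x (e^{P_x + Q_x}·(P_y + Q_y)) + ∂_y ((1/2)·e^{2P_x} + 2·e^{P_x + Q_x} + (1/2)·e^{2Q_x}) holds identically. -/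
open Real Finset

/-- Directional (partial) derivative of `F` in direction `v`, as a function of the point. -/
noncomputable def pd (F : ℝ × ℝ × ℝ → ℝ) (v : ℝ × ℝ × ℝ) (p : ℝ × ℝ × ℝ) : ℝ :=
  fderiv ℝ F p v

lemma pd_smooth {F : ℝ × ℝ × ℝ → ℝ} (hF : ContDiff ℝ (⊤ : ℕ∞) F) (v : ℝ × ℝ × ℝ) :
    ContDiff ℝ (⊤ : ℕ∞) (pd F v) :=
  (hF.fderiv_right (by simp)).clm_apply contDiff_const

lemma hasDerivAt_line1 {F : ℝ × ℝ × ℝ → ℝ} (hF : ContDiff ℝ (⊤ : ℕ∞) F) (x y t : ℝ) :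
    HasDerivAt (fun s => F (s, y, t)) (pd F (1, 0, 0) (x, y, t)) x := by
  have h := ((hF.differentiable (by simp)) (x, y, t)).hasFDerivAt
  have hl : HasDerivAt (fun s : ℝ => ((s, y, t) : ℝ × ℝ × ℝ)) (1, 0, 0) x :=
    HasDerivAt.prodMk (hasDerivAt_id x) (hasDerivAt_const x ((y, t) : ℝ × ℝ))
  exact h.comp_hasDerivAt x hl

lemma hasDerivAt_line2 {F : ℝ × ℝ × ℝ → ℝ} (hF : ContDiff ℝ (⊤ : ℕ∞) F) (x y t : ℝ) :
    HasDerivAt (fun s => F (x, s, t)) (pd F (0, 1, 0) (x, y, t)) y := by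
  have h := ((hF.differentiable (by simp)) (x, y, t)).hasFDerivAt
  have hl : HasDerivAt (fun s : ℝ => ((x, s, t) : ℝ × ℝ × ℝ)) (0, 1, 0) y :=
    HasDerivAt.prodMk (hasDerivAt_const y x) (HasDerivAt.prodMk (hasDerivAt_id y) (hasDerivAt_const y t))
  exact h.comp_hasDerivAt y hl

lemma hasDerivAt_line3 {F : ℝ × ℝ × ℝ → ℝ} (hF : ContDiff ℝ (⊤ : ℕ∞) F) (x y t : ℝ) :
    HasDerivAt (fun s => F (x, y, s)) (pd F (0, 0, 1) (x, y, t)) t := by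
  have h := ((hF.differentiable (by simp)) (x, y, t)).hasFDerivAt
  have hl : HasDerivAt (fun s : ℝ => ((x, y, s) : ℝ × ℝ × ℝ)) (0, 0, 1) t :=
    HasDerivAt.prodMk (hasDerivAt_const t x) (HasDerivAt.prodMk (hasDerivAt_const t y) (hasDerivAt_id t))
  exact h.comp_hasDerivAt t hl

lemma pd_pd {F : ℝ × ℝ × ℝ → ℝ} (hF : ContDiff ℝ (⊤ : ℕ∞) F) (v w p : ℝ × ℝ × ℝ) :
    pd (pd F v) w p = fderiv ℝ (fderiv ℝ F) p w v := by
  have hd : DifferentiableAt ℝ (fderiv ℝ F) p :=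
    ((hF.fderiv_right (show ((⊤ : ℕ∞) : WithTop ℕ∞) + 1 ≤ ((⊤ : ℕ∞) : WithTop ℕ∞) by rw [← WithTop.coe_one, ← WithTop.coe_add]; exact WithTop.coe_le_coe.mpr le_top)).differentiable (by simp)) p
  have h : HasFDerivAt (pd F v)
      ((ContinuousLinearMap.apply ℝ ℝ v).comp (fderiv ℝ (fderiv ℝ F) p)) p :=
    (ContinuousLinearMap.apply ℝ ℝ v).hasFDerivAt.comp p hd.hasFDerivAt
  have h2 := h.fderiv
  show fderiv ℝ (pd F v) p w = _
  rw [h2]; rfl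

lemma sd_symm {F : ℝ × ℝ × ℝ → ℝ} (hF : ContDiff ℝ (⊤ : ℕ∞) F) (p v w : ℝ × ℝ × ℝ) :
    fderiv ℝ (fderiv ℝ F) p v w = fderiv ℝ (fderiv ℝ F) p w v :=
  second_derivative_symmetric
    (fun q => ((hF.differentiable (by simp)) q).hasFDerivAt)
    (((hF.fderiv_right (show ((⊤ : ℕ∞) : WithTop ℕ∞) + 1 ≤ ((⊤ : ℕ∞) : WithTop ℕ∞) by rw [← WithTop.coe_one, ← WithTop.coe_add]; exact WithTop.coe_le_coe.mpr le_top)).differentiable (by simp)) p).hasFDerivAt v w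

theorem toda_first_conservation_law
    (P Q : ℝ → ℝ → ℝ → ℝ)
    (hPsmooth : ContDiff ℝ (⊤ : ℕ∞) (fun p : ℝ × ℝ × ℝ => P p.1 p.2.1 p.2.2))
    (hQsmooth : ContDiff ℝ (⊤ : ℕ∞) (fun p : ℝ × ℝ × ℝ => Q p.1 p.2.1 p.2.2))
    (hP : ∀ x y t : ℝ,
      deriv (fun s => dX P x y s) t =
        deriv (fun s => dX P x s t) y * (Real.exp (dX P x y t) + Real.exp (dX Q x y t))
        + 2 * deriv (fun s => dX Q x s t) y * Real.exp (dX Q x y t)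
        + deriv (fun s => dX Q s y t) x * Real.exp (dX Q x y t) * (dY P x y t + dY Q x y t))
    (hQ : ∀ x y t : ℝ,
      deriv (fun s => dX Q x y s) t =
        deriv (fun s => dX Q x s t) y * (Real.exp (dX Q x y t) + Real.exp (dX P x y t))
        + 2 * deriv (fun s => dX P x s t) y * Real.exp (dX P x y t)
        + deriv (fun s => dX P s y t) x * Real.exp (dX P x y t) * (dY P x y t + dY Q x y t))
    (x y t : ℝ) :
    deriv (fun s => Real.exp (dX P x y s) + Real.exp (dX Q x y s)) t =
      deriv (fun s => Real.exp (dX P s y t + dX Q s y t) * (dY P s y t + dY Q s y t)) x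
      + deriv (fun s => (1 / 2) * Real.exp (2 * dX P x s t) + 2 * Real.exp (dX P x s t + dX Q x s t) + (1 / 2) * Real.exp (2 * dX Q x s t)) y := by
  set FP := fun p : ℝ × ℝ × ℝ => P p.1 p.2.1 p.2.2 with hFPdef
  set FQ := fun p : ℝ × ℝ × ℝ => Q p.1 p.2.1 p.2.2 with hFQdef
  -- values of first partials
  have edXP : ∀ a b c : ℝ, dX P a b c = pd FP (1,0,0) (a,b,c) :=
    fun a b c => (hasDerivAt_line1 hPsmooth a b c).deriv
  have edXQ : ∀ a b c : ℝ, dX Q a b c = pd FQ (1,0,0) (a,b,c) :=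
    fun a b c => (hasDerivAt_line1 hQsmooth a b c).deriv
  have edYP : ∀ a b c : ℝ, dY P a b c = pd FP (0,1,0) (a,b,c) :=
    fun a b c => (hasDerivAt_line2 hPsmooth a b c).deriv
  have edYQ : ∀ a b c : ℝ, dY Q a b c = pd FQ (0,1,0) (a,b,c) :=
    fun a b c => (hasDerivAt_line2 hQsmooth a b c).deriv
  -- second-order curve derivatives
  have h1P : HasDerivAt (fun s => dX P s y t) (pd (pd FP (1,0,0)) (1,0,0) (x,y,t)) x := by
    have hfun : (fun s => dX P s y t) = (fun s => pd FP (1,0,0) (s, y, t)) :=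
      funext fun s => edXP s y t
    rw [hfun]; exact hasDerivAt_line1 (pd_smooth hPsmooth _) x y t
  have h1Q : HasDerivAt (fun s => dX Q s y t) (pd (pd FQ (1,0,0)) (1,0,0) (x,y,t)) x := by
    have hfun : (fun s => dX Q s y t) = (fun s => pd FQ (1,0,0) (s, y, t)) :=
      funext fun s => edXQ s y t
    rw [hfun]; exact hasDerivAt_line1 (pd_smooth hQsmooth _) x y t
  have h2P : HasDerivAt (fun s => dX P x s t) (pd (pd FP (1,0,0)) (0,1,0) (x,y,t)) y := by
    have hfun : (fun s => dX P x s t) = (fun s => pd FP (1,0,0) (x, s, t)) :=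
      funext fun s => edXP x s t
    rw [hfun]; exact hasDerivAt_line2 (pd_smooth hPsmooth _) x y t
  have h2Q : HasDerivAt (fun s => dX Q x s t) (pd (pd FQ (1,0,0)) (0,1,0) (x,y,t)) y := by
    have hfun : (fun s => dX Q x s t) = (fun s => pd FQ (1,0,0) (x, s, t)) :=
      funext fun s => edXQ x s t
    rw [hfun]; exact hasDerivAt_line2 (pd_smooth hQsmooth _) x y t
  have h3P : HasDerivAt (fun s => dX P x y s) (pd (pd FP (1,0,0)) (0,0,1) (x,y,t)) t := by
    have hfun : (fun s => dX P x y s) = (fun s => pd FP (1,0,0) (x, y, s)) :=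
      funext fun s => edXP x y s
    rw [hfun]; exact hasDerivAt_line3 (pd_smooth hPsmooth _) x y t
  have h3Q : HasDerivAt (fun s => dX Q x y s) (pd (pd FQ (1,0,0)) (0,0,1) (x,y,t)) t := by
    have hfun : (fun s => dX Q x y s) = (fun s => pd FQ (1,0,0) (x, y, s)) :=
      funext fun s => edXQ x y s
    rw [hfun]; exact hasDerivAt_line3 (pd_smooth hQsmooth _) x y t
  have h4P : HasDerivAt (fun s => dY P s y t) (pd (pd FP (0,1,0)) (1,0,0) (x,y,t)) x := by
    have hfun : (fun s => dY P s y t) = (fun s => pd FP (0,1,0) (s, y, t)) :=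
      funext fun s => edYP s y t
    rw [hfun]; exact hasDerivAt_line1 (pd_smooth hPsmooth _) x y t
  have h4Q : HasDerivAt (fun s => dY Q s y t) (pd (pd FQ (0,1,0)) (1,0,0) (x,y,t)) x := by
    have hfun : (fun s => dY Q s y t) = (fun s => pd FQ (0,1,0) (s, y, t)) :=
      funext fun s => edYQ s y t
    rw [hfun]; exact hasDerivAt_line1 (pd_smooth hQsmooth _) x y t
  -- symmetry of mixed partials
  have sPxy : pd (pd FP (0,1,0)) (1,0,0) (x,y,t) = pd (pd FP (1,0,0)) (0,1,0) (x,y,t) := by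
    rw [pd_pd hPsmooth, pd_pd hPsmooth]; exact sd_symm hPsmooth (x,y,t) _ _
  have sQxy : pd (pd FQ (0,1,0)) (1,0,0) (x,y,t) = pd (pd FQ (1,0,0)) (0,1,0) (x,y,t) := by
    rw [pd_pd hQsmooth, pd_pd hQsmooth]; exact sd_symm hQsmooth (x,y,t) _ _
  -- values of the time derivatives from the PDE system
  have eP := (h3P.deriv).symm.trans (hP x y t)
  have eQ := (h3Q.deriv).symm.trans (hQ x y t)
  -- compute the three derivatives in the goal
  have hL : HasDerivAt (fun s => Real.exp (dX P x y s) + Real.exp (dX Q x y s))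
      (Real.exp (dX P x y t) * pd (pd FP (1,0,0)) (0,0,1) (x,y,t)
        + Real.exp (dX Q x y t) * pd (pd FQ (1,0,0)) (0,0,1) (x,y,t)) t :=
    (h3P.exp).add (h3Q.exp)
  have hR1 : HasDerivAt
      (fun s => Real.exp (dX P s y t + dX Q s y t) * (dY P s y t + dY Q s y t))
      (Real.exp (dX P x y t + dX Q x y t)
          * (pd (pd FP (1,0,0)) (1,0,0) (x,y,t) + pd (pd FQ (1,0,0)) (1,0,0) (x,y,t))
          * (dY P x y t + dY Q x y t)
        + Real.exp (dX P x y t + dX Q x y t)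
          * (pd (pd FP (0,1,0)) (1,0,0) (x,y,t) + pd (pd FQ (0,1,0)) (1,0,0) (x,y,t))) x :=
    ((h1P.add h1Q).exp).mul (h4P.add h4Q)
  have hR2 : HasDerivAt
      (fun s => (1 / 2) * Real.exp (2 * dX P x s t) + 2 * Real.exp (dX P x s t + dX Q x s t)
        + (1 / 2) * Real.exp (2 * dX Q x s t))
      ((1 / 2) * (Real.exp (2 * dX P x y t) * (2 * pd (pd FP (1,0,0)) (0,1,0) (x,y,t)))
        + 2 * (Real.exp (dX P x y t + dX Q x y t)
            * (pd (pd FP (1,0,0)) (0,1,0) (x,y,t) + pd (pd FQ (1,0,0)) (0,1,0) (x,y,t)))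
        + (1 / 2) * (Real.exp (2 * dX Q x y t) * (2 * pd (pd FQ (1,0,0)) (0,1,0) (x,y,t)))) y :=
    ((((h2P.const_mul 2).exp).const_mul (1/2 : ℝ)).add
      (((h2P.add h2Q).exp).const_mul (2 : ℝ))).add (((h2Q.const_mul 2).exp).const_mul (1/2 : ℝ))
  rw [hL.deriv, hR1.deriv, hR2.deriv, eP, eQ, h2P.deriv, h2Q.deriv, h1P.deriv, h1Q.deriv,
    sPxy, sQxy]
  simp only [Real.exp_add, two_mul]
  ring
end
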